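/- Let S be a (not necessarily commutative) bipotent semiring containing an element of infinite multiplicative order. Then for every n ≥ 2 the semigroups M_n(S) and UT_n(S) are not strongly permutable, and U_n(S) is not strongly permutable if and only if n ≥ 3. -/

import Mathlib

set_option maxHeartbeats 1000000

universe u

/-! ### Semiring classes.

A *semiring* here is a nonempty set with an associative commutative addition and an
associative multiplication which distributes over addition on both sides; no zero or
identity element is assumed. -/

class PlainSemiring (S : Type u) extends Add S, Mul S where
  nonempty' : Nonempty S
  add_assoc' : ∀ a b c : S, a + b + c = a + (b + c)
  add_comm' : ∀ a b : S, a + b = b + a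
  mul_assoc' : ∀ a b c : S, a * b * c = a * (b * c)
  left_distrib' : ∀ a b c : S, a * (b + c) = a * b + a * c
  right_distrib' : ∀ a b c : S, (a + b) * c = a * c + b * c

/-- A bipotent semiring: `x + y` is always either `x` or `y`.
(The induced total order is given by `x ≤ y ↔ x + y = y`.) -/
class BipotentSemiring (S : Type u) extends PlainSemiring S where
  bipotent : ∀ a b : S, a + b = a ∨ a + b = b

/-- A commutative bipotent semiring. -/
class CommBipotentSemiring (S : Type u) extends BipotentSemiring S where
  mul_comm' : ∀ a b : S, a * b = b * a

/-- `mpow a n` is the `(n+1)`-st power of `a`, so the set of positive powers of `a`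
is exactly `Set.range (mpow a)`, and the multiplicative order of `a` is the
cardinality of `Set.range (mpow a)`. -/
def mpow {S : Type*} [Mul S] (a : S) : ℕ → S
  | 0 => a
  | n + 1 => mpow a n * a

lemma mpow_mul_mpow {S : Type*} [PlainSemiring S] (a : S) (m n : ℕ) :
    mpow a m * mpow a n = mpow a (m + n + 1) := by
  induction n with
  | zero => rfl
  | succ n ih =>
    show mpow a m * (mpow a n * a) = mpow a (m + n + 1) * a
    rw [← PlainSemiring.mul_assoc', ih]

/-! ### Products of finite families, and permutability. -/

/-- Fold step used to define sums/products of possibly empty families in a structure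
with no neutral element; the overall fold is `none` iff the family is empty. -/
def optStep {S : Type*} (op : S → S → S) : Option S → S → Option S :=
  fun acc x => some (acc.elim x (fun a => op a x))

/-- The sum `s 0 + s 1 + ⋯` of a finite family, as an `Option` (`none` iff `k = 0`). -/
def finSum {S : Type*} [Add S] {k : ℕ} (s : Fin k → S) : Option S :=
  (List.ofFn s).foldl (optStep (· + ·)) none

/-- The product `s 0 * s 1 * ⋯` of a finite family, as an `Option` (`none` iff `k = 0`). -/
def finProd {S : Type*} [Mul S] {k : ℕ} (s : Fin k → S) : Option S :=
  (List.ofFn s).foldl (optStep (· * ·)) none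

/-- A multiplicative structure is `k`-permutable if every product of `k` elements is
preserved by some non-identity permutation of its factors. -/
def KPermutable (S : Type*) [Mul S] (k : ℕ) : Prop :=
  ∀ s : Fin k → S, ∃ σ : Equiv.Perm (Fin k), σ ≠ Equiv.refl (Fin k) ∧
    finProd (fun i => s (σ i)) = finProd s

/-- A semigroup is strongly permutable if it is `k`-permutable for some `k ≥ 2`. -/
def StronglyPermutable (S : Type*) [Mul S] : Prop :=
  ∃ k : ℕ, 2 ≤ k ∧ KPermutable S k

/-- A semigroup is weakly permutable if for some `k ≥ 2`, any product of `k` elements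
is computed identically by two distinct permutations of its factors. -/
def WeaklyPermutable (S : Type*) [Mul S] : Prop :=
  ∃ k : ℕ, 2 ≤ k ∧ ∀ s : Fin k → S, ∃ σ τ : Equiv.Perm (Fin k), σ ≠ τ ∧
    finProd (fun i => s (σ i)) = finProd (fun i => s (τ i))

/-- Isomorphism of semirings (bijection preserving addition and multiplication). -/
def RingLikeIso (S T : Type*) [Add S] [Mul S] [Add T] [Mul T] : Prop :=
  ∃ f : S → T, Function.Bijective f ∧ (∀ a b : S, f (a + b) = f a + f b) ∧
    (∀ a b : S, f (a * b) = f a * f b)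

/-! ### Matrices. -/

/-- Square `n × n` matrices over `S`. -/
def MatSR (S : Type u) (n : ℕ) : Type u := Fin n → Fin n → S

/-- Matrix multiplication, `(A*B) i j = Σ_k (A i k * B k j)`.  (For `n ≥ 1` — the only
case of interest — the `getD` default value is never used.) -/
def matMul {S : Type*} [Add S] [Mul S] {n : ℕ} (A B : MatSR S n) : MatSR S n :=
  fun i j => (finSum (fun k : Fin n => A i k * B k j)).getD (A i j * B i j)

/-- The multiplicative semigroup `M_n(S)`. -/
instance {S : Type*} [Add S] [Mul S] {n : ℕ} : Mul (MatSR S n) := ⟨matMul⟩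

/-! ### `S⁰`: adjoining a zero, and upper triangular matrices. -/

/-- `S` with a zero (additively neutral, multiplicatively absorbing) element adjoined. -/
inductive Adj0 (S : Type u) : Type u
  | zero : Adj0 S
  | elem : S → Adj0 S

namespace Adj0

def add' {S : Type*} [Add S] : Adj0 S → Adj0 S → Adj0 S
  | .zero, b => b
  | .elem a, .zero => .elem a
  | .elem a, .elem b => .elem (a + b)

def mul' {S : Type*} [Mul S] : Adj0 S → Adj0 S → Adj0 S
  | .zero, _ => .zero
  | .elem _, .zero => .zero
  | .elem a, .elem b => .elem (a * b)

instance {S : Type*} [Add S] : Add (Adj0 S) := ⟨add'⟩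
instance {S : Type*} [Mul S] : Mul (Adj0 S) := ⟨mul'⟩

@[simp] lemma zero_add {S : Type*} [Add S] (b : Adj0 S) : (zero : Adj0 S) + b = b := rfl
@[simp] lemma add_zero {S : Type*} [Add S] (a : Adj0 S) : a + (zero : Adj0 S) = a := by
  cases a <;> rfl
@[simp] lemma elem_add_elem {S : Type*} [Add S] (a b : S) :
    (elem a : Adj0 S) + elem b = elem (a + b) := rfl
@[simp] lemma zero_mul {S : Type*} [Mul S] (b : Adj0 S) : (zero : Adj0 S) * b = zero := rfl
@[simp] lemma mul_zero {S : Type*} [Mul S] (a : Adj0 S) : a * (zero : Adj0 S) = zero := by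
  cases a <;> rfl
@[simp] lemma elem_mul_elem {S : Type*} [Mul S] (a b : S) :
    (elem a : Adj0 S) * elem b = elem (a * b) := rfl

lemma add_eq_zero_iff {S : Type*} [Add S] (a b : Adj0 S) :
    a + b = zero ↔ a = zero ∧ b = zero := by
  cases a <;> cases b <;> simp

end Adj0

lemma foldl_optStep_adj0 {S : Type*} [Add S] (l : List (Adj0 S)) (a : Adj0 S) :
    ∃ c : Adj0 S, l.foldl (optStep (· + ·)) (some a) = some c ∧
      (c = Adj0.zero ↔ a = Adj0.zero ∧ ∀ x ∈ l, x = Adj0.zero) := by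
  induction l generalizing a with
  | nil => exact ⟨a, rfl, by simp⟩
  | cons x l ih =>
    obtain ⟨c, hc, hiff⟩ := ih (a + x)
    refine ⟨c, ?_, ?_⟩
    · simpa [optStep] using hc
    · rw [hiff, Adj0.add_eq_zero_iff]
      simp only [List.mem_cons, forall_eq_or_imp]
      tauto

lemma finSum_adj0_eq_zero {S : Type*} [Add S] {n : ℕ} (f : Fin n → Adj0 S) (i : Fin n)
    (d : Adj0 S) (h : ∀ k, f k = Adj0.zero) : (finSum f).getD d = Adj0.zero := by
  cases n with
  | zero => exact i.elim0
  | succ m =>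
    rw [finSum, List.ofFn_succ, List.foldl_cons]
    obtain ⟨c, hc, hiff⟩ := foldl_optStep_adj0 (List.ofFn fun i : Fin m => f i.succ) (f 0)
    rw [show optStep (· + ·) none (f 0) = some (f 0) from rfl, hc]
    have : c = Adj0.zero := hiff.mpr ⟨h 0, by
      intro x hx
      rw [List.mem_ofFn] at hx
      obtain ⟨j, rfl⟩ := hx
      exact h _⟩
    simp [this]

lemma finSum_adj0_ne_zero {S : Type*} [Add S] {n : ℕ} (f : Fin n → Adj0 S) (i : Fin n)
    (d : Adj0 S) (h : f i ≠ Adj0.zero) : (finSum f).getD d ≠ Adj0.zero := by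
  cases n with
  | zero => exact i.elim0
  | succ m =>
    rw [finSum, List.ofFn_succ, List.foldl_cons]
    obtain ⟨c, hc, hiff⟩ := foldl_optStep_adj0 (List.ofFn fun i : Fin m => f i.succ) (f 0)
    rw [show optStep (· + ·) none (f 0) = some (f 0) from rfl, hc]
    simp only [Option.getD_some]
    intro hcz
    obtain ⟨h0, hall⟩ := hiff.mp hcz
    induction i using Fin.cases with
    | zero => exact h h0
    | succ j => exact h (hall _ (List.mem_ofFn.mpr ⟨j, rfl⟩))

/-- Upper-triangularity over `S⁰`: entries strictly below the diagonal are the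
adjoined zero; entries on and above the diagonal lie in `S`. -/
def IsUT {S : Type*} {n : ℕ} (A : MatSR (Adj0 S) n) : Prop :=
  (∀ i j : Fin n, (j : ℕ) < (i : ℕ) → A i j = Adj0.zero) ∧
  (∀ i j : Fin n, (i : ℕ) ≤ (j : ℕ) → ∃ s : S, A i j = Adj0.elem s)

lemma IsUT.mul {S : Type*} [Add S] [Mul S] {n : ℕ} {A B : MatSR (Adj0 S) n}
    (hA : IsUT A) (hB : IsUT B) : IsUT (matMul A B) := by
  constructor
  · intro i j hji
    apply finSum_adj0_eq_zero _ i
    intro k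
    rcases le_or_gt (i : ℕ) (k : ℕ) with h | h
    · rw [hB.1 k j (lt_of_lt_of_le hji h), Adj0.mul_zero]
    · rw [hA.1 i k h, Adj0.zero_mul]
  · intro i j hij
    have hne : matMul A B i j ≠ Adj0.zero := by
      apply finSum_adj0_ne_zero _ i
      obtain ⟨s, hs⟩ := hA.2 i i le_rfl
      obtain ⟨t, ht⟩ := hB.2 i j hij
      rw [hs, ht, Adj0.elem_mul_elem]
      simp
    cases hc : matMul A B i j with
    | zero => exact absurd hc hne
    | elem s => exact ⟨s, rfl⟩

/-- The multiplicative semigroup `UT_n(S)` of upper triangular matrices over `S⁰`. -/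
def UTMat (S : Type u) (n : ℕ) : Type u := {A : MatSR (Adj0 S) n // IsUT A}

instance {S : Type*} [Add S] [Mul S] {n : ℕ} : Mul (UTMat S n) :=
  ⟨fun A B => ⟨matMul A.1 B.1, A.2.mul B.2⟩⟩

/-! ### `S^{01}`: adjoining a zero and an identity, and unitriangular matrices. -/

/-- `S` with a zero and a multiplicative identity adjoined (`S^{01}` in the paper).
The sum of `one` and an `elem` is left undefined in the paper; it is given an
arbitrary value here, and never arises in products of unitriangular matrices. -/
inductive Adj01 (S : Type u) : Type u
  | zero : Adj01 S
  | one : Adj01 S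
  | elem : S → Adj01 S

namespace Adj01

def add' {S : Type*} [Add S] : Adj01 S → Adj01 S → Adj01 S
  | .zero, b => b
  | a, .zero => a
  | .one, .one => .one
  | .one, .elem b => .elem b
  | .elem a, .one => .elem a
  | .elem a, .elem b => .elem (a + b)

def mul' {S : Type*} [Mul S] : Adj01 S → Adj01 S → Adj01 S
  | .zero, _ => .zero
  | _, .zero => .zero
  | .one, b => b
  | a, .one => a
  | .elem a, .elem b => .elem (a * b)

instance {S : Type*} [Add S] : Add (Adj01 S) := ⟨add'⟩
instance {S : Type*} [Mul S] : Mul (Adj01 S) := ⟨mul'⟩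

@[simp] lemma zero_add {S : Type*} [Add S] (b : Adj01 S) : (zero : Adj01 S) + b = b := by
  cases b <;> rfl
@[simp] lemma add_zero {S : Type*} [Add S] (a : Adj01 S) : a + (zero : Adj01 S) = a := by
  cases a <;> rfl
@[simp] lemma one_add_one {S : Type*} [Add S] : (one : Adj01 S) + one = one := rfl
@[simp] lemma elem_add_elem {S : Type*} [Add S] (a b : S) :
    (elem a : Adj01 S) + elem b = elem (a + b) := rfl
@[simp] lemma one_add_elem {S : Type*} [Add S] (b : S) :
    (one : Adj01 S) + elem b = elem b := rfl
@[simp] lemma elem_add_one {S : Type*} [Add S] (a : S) :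
    (elem a : Adj01 S) + one = elem a := rfl
@[simp] lemma zero_mul {S : Type*} [Mul S] (b : Adj01 S) : (zero : Adj01 S) * b = zero := by
  cases b <;> rfl
@[simp] lemma mul_zero {S : Type*} [Mul S] (a : Adj01 S) : a * (zero : Adj01 S) = zero := by
  cases a <;> rfl
@[simp] lemma one_mul {S : Type*} [Mul S] (b : Adj01 S) : (one : Adj01 S) * b = b := by
  cases b <;> rfl
@[simp] lemma mul_one {S : Type*} [Mul S] (a : Adj01 S) : a * (one : Adj01 S) = a := by
  cases a <;> rfl
@[simp] lemma elem_mul_elem {S : Type*} [Mul S] (a b : S) :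
    (elem a : Adj01 S) * elem b = elem (a * b) := rfl

lemma mul_ne_one {S : Type*} [Mul S] {a b : Adj01 S} (ha : a ≠ one) (hb : b ≠ one) :
    a * b ≠ one := by
  cases a <;> cases b <;> simp_all

lemma add_ne_one {S : Type*} [Add S] {a b : Adj01 S} (ha : a ≠ one) (hb : b ≠ one) :
    a + b ≠ one := by
  cases a <;> cases b <;> simp_all

lemma add_01 {S : Type*} [Add S] {a b : Adj01 S} (ha : a = zero ∨ a = one)
    (hb : b = zero ∨ b = one) :
    (a + b = zero ∨ a + b = one) ∧ (a + b = one ↔ a = one ∨ b = one) := by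
  rcases ha with rfl | rfl <;> rcases hb with rfl | rfl <;> simp

end Adj01

lemma foldl_optStep_adj01 {S : Type*} [Add S] (l : List (Adj01 S)) (a : Adj01 S)
    (ha : a = Adj01.zero ∨ a = Adj01.one) (hl : ∀ x ∈ l, x = Adj01.zero ∨ x = Adj01.one) :
    ∃ c : Adj01 S, l.foldl (optStep (· + ·)) (some a) = some c ∧
      (c = Adj01.zero ∨ c = Adj01.one) ∧
      (c = Adj01.one ↔ a = Adj01.one ∨ ∃ x ∈ l, x = Adj01.one) := by
  induction l generalizing a with
  | nil => exact ⟨a, rfl, ha, by simp⟩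
  | cons x l ih =>
    have hx := hl x (by simp)
    have key := Adj01.add_01 ha hx
    obtain ⟨c, hc, hc01, hiff⟩ := ih (a + x) key.1 (fun y hy => hl y (by simp [hy]))
    refine ⟨c, by simpa [optStep] using hc, hc01, ?_⟩
    rw [hiff, key.2]
    simp only [List.mem_cons, exists_eq_or_imp]
    tauto

lemma foldl_optStep_adj01_ne_one {S : Type*} [Add S] (l : List (Adj01 S)) (a : Adj01 S)
    (ha : a ≠ Adj01.one) (hl : ∀ x ∈ l, x ≠ Adj01.one) :
    ∃ c : Adj01 S, l.foldl (optStep (· + ·)) (some a) = some c ∧ c ≠ Adj01.one := by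
  induction l generalizing a with
  | nil => exact ⟨a, rfl, ha⟩
  | cons x l ih =>
    have hax : a + x ≠ Adj01.one := Adj01.add_ne_one ha (hl x (by simp))
    obtain ⟨c, hc, hcne⟩ := ih (a + x) hax (fun y hy => hl y (by simp [hy]))
    exact ⟨c, by simpa [optStep] using hc, hcne⟩

lemma finSum_adj01_eq_one {S : Type*} [Add S] {n : ℕ} (f : Fin n → Adj01 S) (i : Fin n)
    (d : Adj01 S) (h01 : ∀ k, f k = Adj01.zero ∨ f k = Adj01.one) (hi : f i = Adj01.one) :
    (finSum f).getD d = Adj01.one := by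
  cases n with
  | zero => exact i.elim0
  | succ m =>
    rw [finSum, List.ofFn_succ, List.foldl_cons]
    obtain ⟨c, hc, _, hiff⟩ := foldl_optStep_adj01 (List.ofFn fun i : Fin m => f i.succ) (f 0)
      (h01 0) (by
        intro x hx
        rw [List.mem_ofFn] at hx
        obtain ⟨j, rfl⟩ := hx
        exact h01 _)
    rw [show optStep (· + ·) none (f 0) = some (f 0) from rfl, hc]
    simp only [Option.getD_some]
    apply hiff.mpr
    induction i using Fin.cases with
    | zero => exact Or.inl hi
    | succ j => exact Or.inr ⟨f j.succ, List.mem_ofFn.mpr ⟨j, rfl⟩, hi⟩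

lemma finSum_adj01_eq_zero {S : Type*} [Add S] {n : ℕ} (f : Fin n → Adj01 S) (i : Fin n)
    (d : Adj01 S) (h : ∀ k, f k = Adj01.zero) : (finSum f).getD d = Adj01.zero := by
  cases n with
  | zero => exact i.elim0
  | succ m =>
    rw [finSum, List.ofFn_succ, List.foldl_cons]
    obtain ⟨c, hc, hc01, hiff⟩ := foldl_optStep_adj01 (List.ofFn fun i : Fin m => f i.succ)
      (f 0) (Or.inl (h 0)) (by
        intro x hx
        rw [List.mem_ofFn] at hx
        obtain ⟨j, rfl⟩ := hx
        exact Or.inl (h _))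
    rw [show optStep (· + ·) none (f 0) = some (f 0) from rfl, hc]
    simp only [Option.getD_some]
    rcases hc01 with h' | h'
    · exact h'
    · exfalso
      rcases hiff.mp h' with h'' | ⟨x, hx, hx1⟩
      · rw [h 0] at h''; cases h''
      · rw [List.mem_ofFn] at hx
        obtain ⟨j, rfl⟩ := hx
        rw [h _] at hx1; cases hx1

lemma finSum_adj01_ne_one {S : Type*} [Add S] {n : ℕ} (f : Fin n → Adj01 S) (i : Fin n)
    (d : Adj01 S) (h : ∀ k, f k ≠ Adj01.one) : (finSum f).getD d ≠ Adj01.one := by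
  cases n with
  | zero => exact i.elim0
  | succ m =>
    rw [finSum, List.ofFn_succ, List.foldl_cons]
    obtain ⟨c, hc, hcne⟩ := foldl_optStep_adj01_ne_one (List.ofFn fun i : Fin m => f i.succ)
      (f 0) (h 0) (by
        intro x hx
        rw [List.mem_ofFn] at hx
        obtain ⟨j, rfl⟩ := hx
        exact h _)
    rw [show optStep (· + ·) none (f 0) = some (f 0) from rfl, hc]
    simpa using hcne

/-- Unitriangularity over `S^{01}`: the adjoined zero strictly below the diagonal, the
adjoined identity on the diagonal, and entries of `S⁰` (i.e. anything except the
adjoined identity) strictly above the diagonal. -/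
def IsU {S : Type*} {n : ℕ} (A : MatSR (Adj01 S) n) : Prop :=
  (∀ i j : Fin n, (j : ℕ) < (i : ℕ) → A i j = Adj01.zero) ∧
  (∀ i : Fin n, A i i = Adj01.one) ∧
  (∀ i j : Fin n, (i : ℕ) < (j : ℕ) → A i j ≠ Adj01.one)

lemma IsU.mul {S : Type*} [Add S] [Mul S] {n : ℕ} {A B : MatSR (Adj01 S) n}
    (hA : IsU A) (hB : IsU B) : IsU (matMul A B) := by
  refine ⟨?_, ?_, ?_⟩
  · intro i j hji
    apply finSum_adj01_eq_zero _ i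
    intro k
    rcases le_or_gt (i : ℕ) (k : ℕ) with h | h
    · rw [hB.1 k j (lt_of_lt_of_le hji h), Adj01.mul_zero]
    · rw [hA.1 i k h, Adj01.zero_mul]
  · intro i
    apply finSum_adj01_eq_one _ i
    · intro k
      rcases lt_trichotomy (k : ℕ) (i : ℕ) with h | h | h
      · rw [hA.1 i k h, Adj01.zero_mul]; exact Or.inl rfl
      · have : k = i := Fin.ext h
        subst this
        rw [hA.2.1 k, hB.2.1 k, Adj01.one_mul]; exact Or.inr rfl
      · rw [hB.1 k i h, Adj01.mul_zero]; exact Or.inl rfl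
    · rw [hA.2.1 i, hB.2.1 i, Adj01.one_mul]
  · intro i j hij
    apply finSum_adj01_ne_one _ i
    intro k
    rcases lt_trichotomy (k : ℕ) (i : ℕ) with h | h | h
    · rw [hA.1 i k h, Adj01.zero_mul]; exact fun h => nomatch h
    · have : k = i := Fin.ext h
      subst this
      rw [hA.2.1 k, Adj01.one_mul]
      exact hB.2.2 k j (by omega)
    · rcases lt_trichotomy (k : ℕ) (j : ℕ) with h' | h' | h'
      · exact Adj01.mul_ne_one (hA.2.2 i k h) (hB.2.2 k j h')
      · have : k = j := Fin.ext h'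
        subst this
        rw [hB.2.1 k, Adj01.mul_one]
        exact hA.2.2 i k h
      · rw [hB.1 k j h', Adj01.mul_zero]; exact fun h => nomatch h

/-- The multiplicative monoid `U_n(S)` of unitriangular matrices over `S^{01}`. -/
def UMat (S : Type u) (n : ℕ) : Type u := {A : MatSR (Adj01 S) n // IsU A}

instance {S : Type*} [Add S] [Mul S] {n : ℕ} : Mul (UMat S n) :=
  ⟨fun A B => ⟨matMul A.1 B.1, A.2.mul B.2⟩⟩

/-! ### Monogenic subsemirings. -/

/-- The carrier of the monogenic subsemiring `⟨a⟩` generated by `a` is the set of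
positive powers of `a`; in a bipotent semiring it is closed under addition. -/
instance genAdd {S : Type*} [BipotentSemiring S] (a : S) : Add ↥(Set.range (mpow a)) :=
  ⟨fun p q => ⟨p.1 + q.1, by
    rcases BipotentSemiring.bipotent p.1 q.1 with h | h <;> rw [h]
    exacts [p.2, q.2]⟩⟩

instance genMul {S : Type*} [BipotentSemiring S] (a : S) : Mul ↥(Set.range (mpow a)) :=
  ⟨fun p q => ⟨p.1 * q.1, by
    obtain ⟨m, hm⟩ := p.2
    obtain ⟨n, hn⟩ := q.2
    exact ⟨m + n + 1, by rw [← hm, ← hn, mpow_mul_mpow]⟩⟩⟩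

/-! ### Concrete bipotent semirings. -/

/-- The tropical semiring `ℕ_max` of positive natural numbers: addition is `max`,
multiplication is ordinary addition. -/
def NMax : Type := {n : ℕ // 0 < n}

instance : Add NMax := ⟨fun a b => ⟨max a.1 b.1, by have := a.2; have := b.2; omega⟩⟩
instance : Mul NMax := ⟨fun a b => ⟨a.1 + b.1, by have := a.2; have := b.2; omega⟩⟩

/-- The tropical semiring `(-ℕ)_max` of negative integers: addition is `max`,
multiplication is ordinary addition. -/
def NegNMax : Type := {z : ℤ // z < 0}

instance : Add NegNMax := ⟨fun a b => ⟨max a.1 b.1, by have := a.2; have := b.2; omega⟩⟩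
instance : Mul NegNMax := ⟨fun a b => ⟨a.1 + b.1, by have := a.2; have := b.2; omega⟩⟩

/-- The truncated tropical semiring `[k]_max` on `{1,…,k}`: addition is `max`,
multiplication is `a·b = min (a+b) k`. -/
def KMax (k : ℕ) : Type := {n : ℕ // 0 < n ∧ n ≤ k}

instance {k : ℕ} : Add (KMax k) :=
  ⟨fun a b => ⟨max a.1 b.1, by have := a.2; have := b.2; omega⟩⟩
instance {k : ℕ} : Mul (KMax k) :=
  ⟨fun a b => ⟨min (a.1 + b.1) k, by have := a.2; have := b.2; omega⟩⟩

/-- The truncated tropical semiring `[-k]_max` on `{-k,…,-1}`: addition is `max`,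
multiplication is `a·b = max (a+b) (-k)`. -/
def NegKMax (k : ℕ) : Type := {z : ℤ // -(k : ℤ) ≤ z ∧ z ≤ -1}

instance {k : ℕ} : Add (NegKMax k) :=
  ⟨fun a b => ⟨max a.1 b.1, by have := a.2; have := b.2; omega⟩⟩
instance {k : ℕ} : Mul (NegKMax k) :=
  ⟨fun a b => ⟨max (a.1 + b.1) (-(k : ℤ)), by have := a.2; have := b.2; omega⟩⟩

/-- The two-element boolean semifield `𝔹`: `{0,1}` with `0 < 1`, addition `max` (= "or")
and the usual multiplication (= "and"). -/
def BoolSR : Type := Bool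

instance : Add BoolSR := ⟨fun a b => (Bool.or a b : Bool)⟩
instance : Mul BoolSR := ⟨fun a b => (Bool.and a b : Bool)⟩

/-- A chain semiring: a linearly ordered set with addition `max` and multiplication `min`. -/
def ChainSR (L : Type u) [LinearOrder L] : Type u := L

instance {L : Type u} [LinearOrder L] : Add (ChainSR L) := ⟨fun a b => (max a b : L)⟩
instance {L : Type u} [LinearOrder L] : Mul (ChainSR L) := ⟨fun a b => (min a b : L)⟩

/-- The three-element commutative bipotent semiring of Proposition 1: order `A < B < C`
(addition is `max`), every element multiplicatively idempotent, and all products of two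
distinct elements equal to `B`. -/
inductive Three : Type
  | A : Three
  | B : Three
  | C : Three
deriving DecidableEq

instance : Fintype Three := ⟨{Three.A, Three.B, Three.C}, fun x => by cases x <;> decide⟩

def Three.add' : Three → Three → Three
  | .A, y => y
  | x, .A => x
  | .B, y => y
  | x, .B => x
  | .C, .C => .C

def Three.mul' : Three → Three → Three
  | .A, .A => .A
  | .B, .B => .B
  | .C, .C => .C
  | _, _ => .B

instance : Add Three := ⟨Three.add'⟩
instance : Mul Three := ⟨Three.mul'⟩

instance : CommBipotentSemiring Three where
  nonempty' := ⟨Three.A⟩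
  add_assoc' := by decide
  add_comm' := by decide
  mul_assoc' := by decide
  left_distrib' := by decide
  right_distrib' := by decide
  bipotent := by decide
  mul_comm' := by decide

/-- A bundled (possibly zero-less and identity-less) semiring, used to quantify over
semirings inside hypotheses. -/
structure BundledSemiring : Type 1 where
  carrier : Type
  add : carrier → carrier → carrier
  mul : carrier → carrier → carrier
  nonempty' : Nonempty carrier
  add_assoc' : ∀ a b c, add (add a b) c = add a (add b c)
  add_comm' : ∀ a b, add a b = add b a
  mul_assoc' : ∀ a b c, mul (mul a b) c = mul a (mul b c)
  left_distrib' : ∀ a b c, mul a (add b c) = add (mul a b) (mul a c)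
  right_distrib' : ∀ a b c, mul (add a b) c = add (mul a c) (mul b c)

/-! ### Semifields. -/

/-- `z` is a zero element: additively neutral and multiplicatively absorbing. -/
def IsZeroElem {S : Type*} [Add S] [Mul S] (z : S) : Prop :=
  ∀ x : S, z + x = x ∧ x + z = x ∧ z * x = z ∧ x * z = z

/-- `S` is a semifield: a commutative semiring, possibly without zero, whose set of
non-zero elements forms a group under multiplication (with identity `e`). -/
def IsSemifield (S : Type*) [Add S] [Mul S] : Prop :=
  ∃ e : S, ¬ IsZeroElem e ∧
    (∀ x : S, ¬ IsZeroElem x → e * x = x ∧ x * e = x) ∧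
    (∀ x y : S, ¬ IsZeroElem x → ¬ IsZeroElem y → ¬ IsZeroElem (x * y)) ∧
    (∀ x : S, ¬ IsZeroElem x → ∃ y : S, ¬ IsZeroElem y ∧ x * y = e ∧ y * x = e)

/-! ### Truncated tropical semirings. -/

/-- The underlying set `[x,y] ∪ {0}` of the truncated tropical semiring `𝕋_{[x,y]}`
(without the zero element `-∞`), for `0 ≤ x`.  Addition is `max`; multiplication is
`y`-truncated addition `a ⊗ b = min (a+b) y`, with the element `0` acting as the
multiplicative identity. -/
def TTb (x y : ℝ) (_hx : 0 ≤ x) : Type := {r : ℝ // r = 0 ∨ (x ≤ r ∧ r ≤ y)}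

namespace TTb

protected def add {x y : ℝ} {hx : 0 ≤ x} (a b : TTb x y hx) : TTb x y hx :=
  ⟨max a.1 b.1, by rcases max_choice a.1 b.1 with h | h <;> rw [h]
                   exacts [a.2, b.2]⟩

protected noncomputable def mul {x y : ℝ} {hx : 0 ≤ x} (a b : TTb x y hx) : TTb x y hx :=
  if ha : a.1 = 0 then b else if hb : b.1 = 0 then a else
    ⟨min (a.1 + b.1) y, by
      rcases a.2 with h | h
      · exact absurd h ha
      rcases b.2 with h' | h'
      · exact absurd h' hb
      right
      exact ⟨le_min (by linarith [h.1, h'.1]) (by linarith [h.1, h.2]), min_le_right _ _⟩⟩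

instance {x y : ℝ} {hx : 0 ≤ x} : Add (TTb x y hx) := ⟨TTb.add⟩
noncomputable instance {x y : ℝ} {hx : 0 ≤ x} : Mul (TTb x y hx) := ⟨TTb.mul⟩

end TTb

/-- The truncated tropical semiring `𝕋_{[x,y]}` (for `0 ≤ x < y`): the real interval
`[x,y]` together with a multiplicative identity `0` and a zero `-∞`, with addition
`max` and multiplication the `y`-truncated addition `a ⊗ b = min (a+b) y`. -/
abbrev TT (x y : ℝ) (hx : 0 ≤ x) : Type := Adj0 (TTb x y hx)

/-- The multiplicative identity `0` of `𝕋_{[x,y]}`. -/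
noncomputable def ttId (x y : ℝ) (hx : 0 ≤ x) : TT x y hx := Adj0.elem ⟨0, Or.inl rfl⟩

lemma ttId_mul {x y : ℝ} {hx : 0 ≤ x} (b : TT x y hx) : ttId x y hx * b = b := by
  cases b with
  | zero => rfl
  | elem e =>
    show Adj0.elem (TTb.mul ⟨0, Or.inl rfl⟩ e) = Adj0.elem e
    delta TTb.mul; simp

/-- The subsemigroup `S` of `M_2(𝕋_{[1,z]})` of matrices of the form `[[0,a],[-∞,b]]`. -/
noncomputable def UpperS (z : ℝ) (hz : (0:ℝ) ≤ 1) : Type :=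
  {A : MatSR (TT 1 z hz) 2 // A 0 0 = ttId 1 z hz ∧ A 1 0 = Adj0.zero}

/-- The subsemigroup `S'` of `M_2(𝕋_{[1,z]})` of matrices of the form `[[0,-∞],[a,b]]`. -/
noncomputable def LowerS (z : ℝ) (hz : (0:ℝ) ≤ 1) : Type :=
  {A : MatSR (TT 1 z hz) 2 // A 0 0 = ttId 1 z hz ∧ A 0 1 = Adj0.zero}

noncomputable instance {z : ℝ} {hz : (0:ℝ) ≤ 1} : Mul (UpperS z hz) :=
  ⟨fun A B => ⟨A.1 * B.1, by
    obtain ⟨hA1, hA2⟩ := A.2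
    obtain ⟨hB1, hB2⟩ := B.2
    constructor
    · show A.1 0 0 * B.1 0 0 + A.1 0 1 * B.1 1 0 = ttId 1 z hz
      rw [hA1, hB1, hB2, ttId_mul, Adj0.mul_zero, Adj0.add_zero]
    · show A.1 1 0 * B.1 0 0 + A.1 1 1 * B.1 1 0 = Adj0.zero
      rw [hA2, hB2, Adj0.zero_mul, Adj0.mul_zero, Adj0.add_zero]⟩⟩

noncomputable instance {z : ℝ} {hz : (0:ℝ) ≤ 1} : Mul (LowerS z hz) :=
  ⟨fun A B => ⟨A.1 * B.1, by
    obtain ⟨hA1, hA2⟩ := A.2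
    obtain ⟨hB1, hB2⟩ := B.2
    constructor
    · show A.1 0 0 * B.1 0 0 + A.1 0 1 * B.1 1 0 = ttId 1 z hz
      rw [hA1, hB1, hA2, ttId_mul, Adj0.zero_mul, Adj0.add_zero]
    · show A.1 0 0 * B.1 0 1 + A.1 0 1 * B.1 1 1 = Adj0.zero
      rw [hA1, hB2, hA2, ttId_mul, Adj0.zero_mul, Adj0.add_zero]⟩⟩


/-! ### Additional machinery for Statement 8. -/

namespace Stmt8

/-- Left-associated fold `g 0 ⋆ g 1 ⋆ ⋯ ⋆ g m`. -/
def natFold {M : Type*} (op : M → M → M) (g : ℕ → M) : ℕ → M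
  | 0 => g 0
  | r + 1 => op (natFold op g r) (g (r + 1))

lemma natFold_congr {M : Type*} (op : M → M → M) {g g' : ℕ → M} :
    ∀ m, (∀ r, r ≤ m → g r = g' r) → natFold op g m = natFold op g' m
  | 0, h => h 0 le_rfl
  | m + 1, h => by
    simp only [natFold]
    rw [natFold_congr op m (fun r hr => h r (Nat.le_succ_of_le hr)), h (m + 1) le_rfl]

lemma foldl_optStep_ofFn {M : Type*} (op : M → M → M) :
    ∀ {m : ℕ} (f : Fin (m + 1) → M) (g : ℕ → M),
      (∀ r (hr : r < m + 1), f ⟨r, hr⟩ = g r) →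
      (List.ofFn f).foldl (optStep op) none = some (natFold op g m)
  | 0, f, g, hg => by
    have h0 : f 0 = g 0 := hg 0 (by omega)
    simp [List.ofFn_succ, optStep, natFold, h0]
  | m + 1, f, g, hg => by
    rw [List.ofFn_succ' f, List.concat_eq_append, List.foldl_append,
      foldl_optStep_ofFn op (fun i => f (Fin.castSucc i)) g
        (fun r hr => hg r (by omega))]
    simp only [List.foldl_cons, List.foldl_nil, optStep, Option.elim_none, Option.elim_some]
    rw [show Fin.last (m + 1) = (⟨m + 1, by omega⟩ : Fin (m + 2)) from rfl,
      hg (m + 1) (by omega)]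
    rfl

lemma natFold_stable {M : Type*} (op : M → M → M) (g : ℕ → M) (z : M)
    (hzR : ∀ y, op y z = y) (c : ℕ) :
    ∀ m, c ≤ m → (∀ r, c < r → r ≤ m → g r = z) → natFold op g m = natFold op g c
  | 0, hc, _ => by rw [Nat.le_zero.mp hc]
  | m + 1, hc, h => by
    rcases Nat.eq_or_lt_of_le hc with rfl | hlt
    · rfl
    · simp only [natFold]
      rw [h (m + 1) hlt le_rfl, hzR,
        natFold_stable op g z hzR c m (by omega) (fun r h1 h2 => h r h1 (by omega))]

lemma natFold_allz {M : Type*} (op : M → M → M) (g : ℕ → M) (z : M)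
    (hzz : op z z = z) : ∀ m, (∀ r, r ≤ m → g r = z) → natFold op g m = z
  | 0, h => h 0 le_rfl
  | m + 1, h => by
    simp only [natFold]
    rw [natFold_allz op g z hzz m (fun r hr => h r (by omega)), h (m + 1) le_rfl, hzz]

lemma natFold_single {M : Type*} (op : M → M → M) (g : ℕ → M) (z v : M)
    (hzz : op z z = z) (hzL : op z v = v) (hzR : ∀ y, op y z = y)
    (i m : ℕ) (him : i ≤ m) (hi : g i = v) (h : ∀ r, r ≤ m → r ≠ i → g r = z) :
    natFold op g m = v := by
  rw [natFold_stable op g z hzR i m him (fun r h1 h2 => h r h2 (by omega))]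
  cases i with
  | zero => exact hi
  | succ c =>
    simp only [natFold]
    rw [natFold_allz op g z hzz c (fun r hr => h r (by omega) (by omega)), hi, hzL]

lemma natFold_pair01 {M : Type*} (op : M → M → M) (g : ℕ → M) (z : M)
    (hzR : ∀ y, op y z = y) (m : ℕ) (hm : 1 ≤ m)
    (h : ∀ r, 2 ≤ r → r ≤ m → g r = z) :
    natFold op g m = op (g 0) (g 1) := by
  rw [natFold_stable op g z hzR 1 m hm (fun r h1 h2 => h r (by omega) h2)]
  rfl

lemma natFold_triple012 {M : Type*} (op : M → M → M) (g : ℕ → M) (z : M)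
    (hzR : ∀ y, op y z = y) (m : ℕ) (hm : 2 ≤ m)
    (h : ∀ r, 3 ≤ r → r ≤ m → g r = z) :
    natFold op g m = op (op (g 0) (g 1)) (g 2) := by
  rw [natFold_stable op g z hzR 2 m hm (fun r h1 h2 => h r (by omega) h2)]
  rfl

lemma natFold_two_block {M : Type*} (op : M → M → M) (g : ℕ → M) (w0 w1 : M)
    (habs : op (op w0 w1) w1 = op w0 w1) (h0 : g 0 = w0)
    (h1 : ∀ r, 1 ≤ r → g r = w1) :
    ∀ m, 1 ≤ m → natFold op g m = op w0 w1
  | 1, _ => by simp [natFold, h0, h1 1 (by omega)]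
  | m + 2, _ => by
    show op (natFold op g (m + 1)) (g (m + 2)) = op w0 w1
    rw [natFold_two_block op g w0 w1 habs h0 h1 (m + 1) (by omega),
      h1 (m + 2) (by omega), habs]

/-- Evaluate `finSum` via `natFold`. -/
lemma finSum_natFold {M : Type*} [Add M] {m : ℕ} (f : Fin (m + 1) → M)
    (g : ℕ → M) (hg : ∀ r (hr : r < m + 1), f ⟨r, hr⟩ = g r) :
    finSum f = some (natFold (· + ·) g m) :=
  foldl_optStep_ofFn _ f g hg

/-- Evaluate `finProd` via `natFold`. -/
lemma finProd_natFold {M : Type*} [Mul M] {m : ℕ} (f : Fin (m + 1) → M)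
    (g : ℕ → M) (hg : ∀ r (hr : r < m + 1), f ⟨r, hr⟩ = g r) :
    finProd f = some (natFold (· * ·) g m) :=
  foldl_optStep_ofFn _ f g hg

lemma matMul_natFold {M : Type*} [Add M] [Mul M] {m : ℕ} (A B : MatSR M (m + 1))
    (i j : Fin (m + 1)) (g : ℕ → M)
    (hg : ∀ r (hr : r < m + 1), A i ⟨r, hr⟩ * B ⟨r, hr⟩ j = g r) :
    matMul A B i j = natFold (· + ·) g m := by
  unfold matMul
  rw [finSum_natFold (fun k => A i k * B k j) g (fun r hr => hg r hr)]
  rfl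

section Bipotent

variable {S : Type u} [BipotentSemiring S] (a : S)

lemma bs_add_self (x : S) : x + x = x := by
  rcases BipotentSemiring.bipotent x x with h | h <;> exact h

lemma mpow_one_eq : mpow a 1 = a * a := rfl

lemma mpow_succ (n : ℕ) : mpow a (n + 1) = mpow a n * a := rfl

/-- If two positive powers coincide then the set of powers is finite. -/
lemma mpow_finite_of_eq {p q : ℕ} (hpq : p < q) (he : mpow a p = mpow a q) :
    (Set.range (mpow a)).Finite := by
  have key : ∀ j, ∃ i, i < q ∧ mpow a j = mpow a i := by
    intro j
    induction j using Nat.strong_induction_on with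
    | _ j IH =>
      rcases Nat.lt_or_ge j q with hj | hj
      · exact ⟨j, hj, rfl⟩
      rcases Nat.eq_or_lt_of_le hj with rfl | hj'
      · exact ⟨p, hpq, he.symm⟩
      -- j > q
      have h1 : mpow a q * mpow a (j - q - 1) = mpow a j := by
        rw [mpow_mul_mpow]; congr 1; omega
      have h2 : mpow a p * mpow a (j - q - 1) = mpow a (j - (q - p)) := by
        rw [mpow_mul_mpow]; congr 1; omega
      have h3 : mpow a j = mpow a (j - (q - p)) := by rw [← h1, ← he, h2]
      obtain ⟨i, hi, hee⟩ := IH (j - (q - p)) (by omega)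
      exact ⟨i, hi, h3.trans hee⟩
  have hsub : Set.range (mpow a) ⊆ (mpow a) '' (Set.Iio q) := by
    rintro x ⟨j, rfl⟩
    obtain ⟨i, hi, hee⟩ := key j
    exact ⟨i, hi, hee.symm⟩
  exact ((Set.toFinite (Set.Iio q)).image _).subset hsub

/-- Injectivity of `mpow` from infinite multiplicative order. -/
lemma mpow_injective (ha : (Set.range (mpow a)).Infinite) :
    Function.Injective (mpow a) := by
  intro p q hpq
  by_contra hne
  rcases Nat.lt_or_ge p q with hlt | hge
  · exact ha (mpow_finite_of_eq a hlt hpq)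
  · exact ha (mpow_finite_of_eq a (by omega : q < p) hpq.symm)

/-- Monotone step: `a^(m+1) + a^(m+2) = a^(m+2)`-type lemma, in both orientations. -/
lemma mpow_add_succ (hc : a + a * a = a * a) :
    ∀ m, mpow a m + mpow a (m + 1) = mpow a (m + 1)
  | 0 => hc
  | m + 1 => by
    have := congrArg (· * a) (mpow_add_succ hc m)
    simp only [PlainSemiring.right_distrib'] at this; exact this

lemma mpow_add_succ' (hc : a + a * a = a) :
    ∀ m, mpow a (m + 1) + mpow a m = mpow a m
  | 0 => by rw [PlainSemiring.add_comm']; exact hc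
  | m + 1 => by
    have := congrArg (· * a) (mpow_add_succ' hc m)
    simp only [PlainSemiring.right_distrib'] at this; exact this

lemma mpow_add_le (hc : a + a * a = a * a) (m : ℕ) :
    ∀ d, mpow a m + mpow a (m + d) = mpow a (m + d)
  | 0 => bs_add_self _
  | d + 1 => by
    have h1 := mpow_add_succ a hc (m + d)
    calc mpow a m + mpow a (m + (d + 1))
        = mpow a m + (mpow a (m + d) + mpow a (m + d + 1)) := by
          rw [h1]; rfl
      _ = (mpow a m + mpow a (m + d)) + mpow a (m + d + 1) := by
          rw [PlainSemiring.add_assoc']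
      _ = mpow a (m + d) + mpow a (m + d + 1) := by rw [mpow_add_le hc m d]
      _ = mpow a (m + (d + 1)) := h1

lemma mpow_add_le' (hc : a + a * a = a) (m : ℕ) :
    ∀ d, mpow a (m + d) + mpow a m = mpow a m
  | 0 => bs_add_self _
  | d + 1 => by
    have h1 := mpow_add_succ' a hc (m + d)
    calc mpow a (m + (d + 1)) + mpow a m
        = mpow a (m + d + 1) + (mpow a (m + d) + mpow a m) := by
          rw [mpow_add_le' hc m d]; rfl
      _ = (mpow a (m + d + 1) + mpow a (m + d)) + mpow a m := by
          rw [PlainSemiring.add_assoc']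
      _ = mpow a (m + d) + mpow a m := by rw [h1]
      _ = mpow a m := mpow_add_le' hc m d

lemma mpow_add_max (hc : a + a * a = a * a) (p q : ℕ) :
    mpow a p + mpow a q = mpow a (max p q) := by
  rcases Nat.le_total p q with h | h
  · have := mpow_add_le a hc p (q - p)
    rw [show p + (q - p) = q by omega] at this
    rw [this, Nat.max_eq_right h]
  · have := mpow_add_le a hc q (p - q)
    rw [show q + (p - q) = p by omega] at this
    rw [PlainSemiring.add_comm', this, Nat.max_eq_left h]

lemma mpow_add_min (hc : a + a * a = a) (p q : ℕ) :
    mpow a p + mpow a q = mpow a (min p q) := by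
  rcases Nat.le_total p q with h | h
  · have := mpow_add_le' a hc p (q - p)
    rw [show p + (q - p) = q by omega] at this
    rw [PlainSemiring.add_comm', this, Nat.min_eq_left h]
  · have := mpow_add_le' a hc q (p - q)
    rw [show q + (p - q) = p by omega] at this
    rw [this, Nat.min_eq_right h]

end Bipotent






/-! ### Permutation helpers -/

section Perm

/-- Padding a permutation of `Fin (K+1)` to a function `ℕ → ℕ`. -/
def upad {K : ℕ} (σ : Equiv.Perm (Fin (K + 1))) : ℕ → ℕ :=
  fun r => if h : r < K + 1 then (σ ⟨r, h⟩ : ℕ) else r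

lemma upad_le {K : ℕ} (σ : Equiv.Perm (Fin (K + 1))) (r : ℕ) (hr : r ≤ K) :
    upad σ r ≤ K := by
  rw [upad, dif_pos (by omega)]
  exact Nat.lt_succ_iff.mp (σ ⟨r, by omega⟩).2

lemma upad_inj {K : ℕ} (σ : Equiv.Perm (Fin (K + 1))) (r s : ℕ) (hr : r ≤ K)
    (hs : s ≤ K) (h : upad σ r = upad σ s) : r = s := by
  simp only [upad, dif_pos (show r < K + 1 by omega),
    dif_pos (show s < K + 1 by omega)] at h
  have h2 : σ ⟨r, by omega⟩ = σ ⟨s, by omega⟩ := Fin.ext h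
  simpa using σ.injective h2

lemma upad_surj {K : ℕ} (σ : Equiv.Perm (Fin (K + 1))) (v : ℕ) (hv : v ≤ K) :
    ∃ p, p ≤ K ∧ upad σ p = v := by
  have hp : (σ.symm ⟨v, by omega⟩ : Fin (K + 1)).1 < K + 1 := (σ.symm ⟨v, by omega⟩).2
  refine ⟨_, Nat.lt_succ_iff.mp hp, ?_⟩
  simp only [upad, dif_pos hp, Fin.eta, Equiv.apply_symm_apply]

lemma upad_dev {K : ℕ} (σ : Equiv.Perm (Fin (K + 1))) (hσ : σ ≠ Equiv.refl _) :
    ∃ i, i ≤ K ∧ upad σ i ≠ i := by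
  by_contra h
  push_neg at h
  apply hσ
  ext x
  have := h x.1 (Nat.lt_succ_iff.mp x.2)
  rw [upad, dif_pos x.2] at this
  simpa [Fin.ext_iff] using this

lemma exists_first_dev (u : ℕ → ℕ) (K : ℕ)
    (hinj : ∀ r s, r ≤ K → s ≤ K → u r = u s → r = s)
    (hdev : ∃ i, i ≤ K ∧ u i ≠ i) :
    ∃ j0, j0 ≤ K ∧ j0 < u j0 ∧ ∀ i, i < j0 → u i = i := by
  classical
  have hex : ∃ i, u i ≠ i ∧ i ≤ K := hdev.imp (fun i h => ⟨h.2, h.1⟩)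
  have hspec := Nat.find_spec hex
  have hmin : ∀ i, i < Nat.find hex → u i = i := by
    intro i hi
    by_contra hne
    have hK := hspec.2
    have hik : i ≤ K := by omega
    exact Nat.find_min hex hi ⟨hne, hik⟩
  refine ⟨Nat.find hex, hspec.2, ?_, hmin⟩
  rcases Nat.lt_trichotomy (u (Nat.find hex)) (Nat.find hex) with h | h | h
  · exact absurd
      (hinj (u (Nat.find hex)) (Nat.find hex) (by omega) hspec.2 (by rw [hmin _ h]))
      (by omega)
  · exact absurd h hspec.1
  · exact h

lemma exists_inversion (u : ℕ → ℕ) (K : ℕ)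
    (hinj : ∀ r s, r ≤ K → s ≤ K → u r = u s → r = s)
    (hsurj : ∀ v, v ≤ K → ∃ p, p ≤ K ∧ u p = v)
    (hdev : ∃ i, i ≤ K ∧ u i ≠ i) :
    ∃ i j, i < j ∧ j ≤ K ∧ u j < u i := by
  obtain ⟨j0, hj0K, hgt, hmin⟩ := exists_first_dev u K hinj hdev
  obtain ⟨p, hpK, hp⟩ := hsurj j0 hj0K
  have hpj : j0 < p := by
    rcases Nat.lt_trichotomy p j0 with h | h | h
    · have h1 := hmin p h
      omega
    · subst h
      omega
    · exact h
  exact ⟨j0, p, hpj, hpK, by omega⟩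

lemma mono_forces_id (u : ℕ → ℕ) (K : ℕ) (hmono : ∀ r, r < K → u r < u (r + 1))
    (hb : ∀ r, r ≤ K → u r ≤ K) : ∀ r, r ≤ K → u r = r := by
  have low : ∀ d r, r + d ≤ K → u r + d ≤ u (r + d) := by
    intro d
    induction d with
    | zero => intro r _; simp
    | succ d ih =>
      intro r h
      have h1 := ih r (by omega)
      have h2 := hmono (r + d) (by omega)
      have h3 : r + (d + 1) = (r + d) + 1 := rfl
      rw [h3]
      omega
  have hu0 : u 0 = 0 := by
    have l1 := low K 0 (by omega)
    rw [Nat.zero_add] at l1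
    have := hb K le_rfl
    omega
  have high : ∀ d, d ≤ K → u (K - d) ≤ K - d := by
    intro d
    induction d with
    | zero => intro _; simpa using hb K le_rfl
    | succ d ih =>
      intro h
      have h1 := ih (by omega)
      have h2 := hmono (K - (d + 1)) (by omega)
      have h3 : K - (d + 1) + 1 = K - d := by omega
      rw [h3] at h2
      omega
  intro r hr
  have l1 := low r 0 (by omega)
  rw [Nat.zero_add] at l1
  have h1 := high (K - r) (by omega)
  have h2 : K - (K - r) = r := by omega
  rw [h2] at h1
  omega

lemma exists_descent (u : ℕ → ℕ) (K : ℕ) (hb : ∀ r, r ≤ K → u r ≤ K)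
    (hinj : ∀ r s, r ≤ K → s ≤ K → u r = u s → r = s)
    (hdev : ∃ i, i ≤ K ∧ u i ≠ i) : ∃ r, r < K ∧ u (r + 1) < u r := by
  by_contra h
  push_neg at h
  have hmono : ∀ r, r < K → u r < u (r + 1) := by
    intro r hr
    refine lt_of_le_of_ne (h r hr) (fun he => ?_)
    have := hinj r (r + 1) (by omega) (by omega) he
    omega
  obtain ⟨i, hi, hne⟩ := hdev
  exact hne (mono_forces_id u K hmono hb i hi)

end Perm


/-! ### The `UT_n` construction -/

section UTCore

variable {S : Type u} [BipotentSemiring S] (a : S)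

/-- Upper triangular generator matrix with (0,0)-exponent `x`, (0,1)-exponent `t`,
(1,1)-exponent `y`; all other relevant entries `x`. -/
def utGenM (x t y : ℕ) (n : ℕ) : MatSR (Adj0 S) n := fun i j =>
  if j.val < i.val then Adj0.zero
  else if i.val = 0 ∧ j.val = 1 then Adj0.elem (mpow a t)
  else if i.val = 1 ∧ j.val = 1 then Adj0.elem (mpow a y)
  else Adj0.elem (mpow a x)

lemma utGenM_isUT (x t y n : ℕ) : IsUT (utGenM a x t y n) := by
  constructor
  · intro i j hji
    simp only [utGenM, if_pos hji]
  · intro i j hij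
    simp only [utGenM, if_neg (by omega : ¬ (j.val < i.val))]
    split
    · exact ⟨_, rfl⟩
    · split
      · exact ⟨_, rfl⟩
      · exact ⟨_, rfl⟩

/-- The generator as an element of `UT_n`. -/
def utGen (x t y : ℕ) (n : ℕ) : UTMat S n := ⟨utGenM a x t y n, utGenM_isUT a x t y n⟩

/-- Corner invariant for partial products in `UT_n`. -/
def utInv (X T Y : ℕ) {m : ℕ} (Q : UTMat S (m + 2)) : Prop :=
  Q.1 ⟨0, by omega⟩ ⟨0, by omega⟩ = Adj0.elem (mpow a X) ∧
  Q.1 ⟨0, by omega⟩ ⟨1, by omega⟩ = Adj0.elem (mpow a T) ∧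
  Q.1 ⟨1, by omega⟩ ⟨1, by omega⟩ = Adj0.elem (mpow a Y)

lemma utGenM_00 (x t y n : ℕ) (h : 0 < n) :
    utGenM a x t y n ⟨0, h⟩ ⟨0, h⟩ = Adj0.elem (mpow a x) := by
  simp [utGenM]

lemma utGenM_01 (x t y n : ℕ) (h : 1 < n) :
    utGenM a x t y n ⟨0, by omega⟩ ⟨1, h⟩ = Adj0.elem (mpow a t) := by
  simp [utGenM]

lemma utGenM_11 (x t y n : ℕ) (h : 1 < n) :
    utGenM a x t y n ⟨1, h⟩ ⟨1, h⟩ = Adj0.elem (mpow a y) := by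
  simp [utGenM]

lemma utGenM_lt (x t y n : ℕ) (i j : Fin n) (hji : j.val < i.val) :
    utGenM a x t y n i j = Adj0.zero := by
  simp only [utGenM, if_pos hji]

lemma utInv_step {m : ℕ} (X T Y x t y : ℕ) (Q : UTMat S (m + 2))
    (h : utInv a X T Y Q) :
    (Q * utGen a x t y (m + 2)).1 ⟨0, by omega⟩ ⟨0, by omega⟩
        = Adj0.elem (mpow a (X + x + 1)) ∧
    (Q * utGen a x t y (m + 2)).1 ⟨0, by omega⟩ ⟨1, by omega⟩
        = Adj0.elem (mpow a (X + t + 1) + mpow a (T + y + 1)) ∧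
    (Q * utGen a x t y (m + 2)).1 ⟨1, by omega⟩ ⟨1, by omega⟩
        = Adj0.elem (mpow a (Y + y + 1)) := by
  obtain ⟨h00, h01, h11⟩ := h
  have hmul : (Q * utGen a x t y (m + 2)).1 = matMul Q.1 (utGenM a x t y (m + 2)) := rfl
  refine ⟨?_, ?_, ?_⟩
  · rw [hmul, matMul_natFold Q.1 _ _ _
      (g := fun r => if r = 0 then Adj0.elem (mpow a (X + x + 1)) else Adj0.zero) ?_]
    · exact natFold_single _ _ Adj0.zero _ rfl (Adj0.zero_add _) Adj0.add_zero
        0 (m + 1) (by omega) (by simp) (fun r h1 h2 => by simp [h2])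
    · intro r hr
      show Q.1 _ _ * _ = if r = 0 then Adj0.elem (mpow a (X + x + 1)) else Adj0.zero
      rcases Nat.eq_zero_or_pos r with rfl | hrpos
      · rw [if_pos rfl, show (⟨0, hr⟩ : Fin (m + 2)) = ⟨0, by omega⟩ from rfl,
          h00, utGenM_00 a x t y (m + 2) (by omega)]
        simp [mpow_mul_mpow]
      · rw [if_neg (by omega), utGenM_lt a x t y (m + 2) ⟨r, hr⟩ ⟨0, by omega⟩
          (by simpa using hrpos), Adj0.mul_zero]
  · rw [hmul, matMul_natFold Q.1 _ _ _
      (g := fun r => if r = 0 then Adj0.elem (mpow a (X + t + 1))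
        else if r = 1 then Adj0.elem (mpow a (T + y + 1)) else Adj0.zero) ?_]
    · rw [natFold_pair01 _ _ Adj0.zero Adj0.add_zero (m + 1) (by omega)
        (fun r h1 h2 => by
          show (if r = 0 then _ else if r = 1 then _ else Adj0.zero) = Adj0.zero
          rw [if_neg (by omega), if_neg (by omega)])]
      simp
    · intro r hr
      show Q.1 _ _ * _ = if r = 0 then Adj0.elem (mpow a (X + t + 1))
        else if r = 1 then Adj0.elem (mpow a (T + y + 1)) else Adj0.zero
      rcases Nat.eq_zero_or_pos r with rfl | hrpos
      · rw [if_pos rfl, show (⟨0, hr⟩ : Fin (m + 2)) = ⟨0, by omega⟩ from rfl,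
          h00, utGenM_01 a x t y (m + 2) (by omega)]
        simp [mpow_mul_mpow]
      rcases Nat.eq_or_lt_of_le hrpos with rfl | hr2
      · rw [if_neg (by omega), if_pos rfl,
          show (⟨1, hr⟩ : Fin (m + 2)) = ⟨1, by omega⟩ from rfl,
          h01, utGenM_11 a x t y (m + 2) (by omega)]
        simp [mpow_mul_mpow]
      · rw [if_neg (by omega), if_neg (by omega),
          utGenM_lt a x t y (m + 2) ⟨r, hr⟩ ⟨1, by omega⟩ (by simpa using hr2),
          Adj0.mul_zero]
  · rw [hmul, matMul_natFold Q.1 _ _ _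
      (g := fun r => if r = 1 then Adj0.elem (mpow a (Y + y + 1)) else Adj0.zero) ?_]
    · exact natFold_single _ _ Adj0.zero _ rfl (Adj0.zero_add _) Adj0.add_zero
        1 (m + 1) (by omega) (by simp) (fun r h1 h2 => by simp [h2])
    · intro r hr
      show Q.1 _ _ * _ = if r = 1 then Adj0.elem (mpow a (Y + y + 1)) else Adj0.zero
      rcases Nat.eq_zero_or_pos r with rfl | hrpos
      · rw [if_neg (by omega), Q.2.1 ⟨1, by omega⟩ ⟨0, hr⟩ (by simp), Adj0.zero_mul]
      rcases Nat.eq_or_lt_of_le hrpos with rfl | hr2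
      · rw [if_pos rfl, show (⟨1, hr⟩ : Fin (m + 2)) = ⟨1, by omega⟩ from rfl,
          h11, utGenM_11 a x t y (m + 2) (by omega)]
        simp [mpow_mul_mpow]
      · rw [if_neg (by omega),
          utGenM_lt a x t y (m + 2) ⟨r, hr⟩ ⟨1, by omega⟩ (by simpa using hr2),
          Adj0.mul_zero]

end UTCore


/-! ### The `UT_n` refutation -/

section UTRef

variable {S : Type u} [BipotentSemiring S] (a : S)

/-- Data sequence for the increasing (max) case. -/
def utSeqMax (u : ℕ → ℕ) : ℕ → ℕ × ℕ × ℕ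
  | 0 => (0, u 0 + 1, 1)
  | r + 1 =>
    ((utSeqMax u r).1 + 0 + 1,
     max ((utSeqMax u r).1 + (u (r + 1) + 1) + 1) ((utSeqMax u r).2.1 + 1 + 1),
     (utSeqMax u r).2.2 + 1 + 1)

lemma utSeqMax_X (u : ℕ → ℕ) : ∀ r, (utSeqMax u r).1 = r
  | 0 => rfl
  | r + 1 => by simp only [utSeqMax, utSeqMax_X u r]

lemma utSeqMax_Y (u : ℕ → ℕ) : ∀ r, (utSeqMax u r).2.2 = 2 * r + 1
  | 0 => rfl
  | r + 1 => by simp only [utSeqMax, utSeqMax_Y u r]; omega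

lemma utSeqMax_T_id (u : ℕ → ℕ) :
    ∀ r, (∀ i, i ≤ r → u i = i) → (utSeqMax u r).2.1 = 2 * r + 1
  | 0, h => by simp [utSeqMax, h 0 le_rfl]
  | r + 1, h => by
    simp only [utSeqMax, utSeqMax_X u r,
      utSeqMax_T_id u r (fun i hi => h i (by omega)), h (r + 1) le_rfl]
    omega

lemma utSeqMax_T_dev (u : ℕ → ℕ) (K : ℕ) (hb : ∀ i, i ≤ K → u i ≤ K)
    (hinj : ∀ r s, r ≤ K → s ≤ K → u r = u s → r = s) :
    ∀ r, r ≤ K → (∃ i, i ≤ r ∧ u i ≠ i) → 2 * r + 2 ≤ (utSeqMax u r).2.1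
  | 0, _, hdev => by
    obtain ⟨i, hi, hne⟩ := hdev
    interval_cases i
    simp only [utSeqMax]
    omega
  | r + 1, hrK, hdev => by
    by_cases hpre : ∃ i, i ≤ r ∧ u i ≠ i
    · have := utSeqMax_T_dev u K hb hinj r (by omega) hpre
      simp only [utSeqMax]
      omega
    · push_neg at hpre
      have hup : r + 2 ≤ u (r + 1) := by
        obtain ⟨i, hi, hne⟩ := hdev
        have hir : i = r + 1 := by
          by_contra hir
          exact hne (hpre i (by omega))
        subst hir
        by_contra hlt
        push_neg at hlt
        rcases Nat.lt_or_ge (u (r + 1)) (r + 1) with hc | hc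
        · exact hne (hinj (r + 1) (u (r + 1)) (by omega) (by omega)
            (by rw [hpre (u (r + 1)) (by omega)]) ▸ (by
              have := hinj (u (r + 1)) (r + 1) (by omega) (by omega)
                (by rw [hpre (u (r + 1)) (by omega)])
              omega))
        · omega
      simp only [utSeqMax, utSeqMax_X u r]
      omega

/-- Data sequence for the decreasing (min) case. -/
def utSeqMin (K : ℕ) (u : ℕ → ℕ) : ℕ → ℕ × ℕ × ℕ
  | 0 => (1, (K - u 0) + 1, 0)
  | r + 1 =>
    ((utSeqMin K u r).1 + 1 + 1,
     min ((utSeqMin K u r).1 + ((K - u (r + 1)) + 1) + 1) ((utSeqMin K u r).2.1 + 0 + 1),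
     (utSeqMin K u r).2.2 + 0 + 1)

lemma utSeqMin_X (K : ℕ) (u : ℕ → ℕ) : ∀ r, (utSeqMin K u r).1 = 2 * r + 1
  | 0 => rfl
  | r + 1 => by simp only [utSeqMin, utSeqMin_X K u r]; omega

lemma utSeqMin_T_id (K : ℕ) (u : ℕ → ℕ) :
    ∀ r, r ≤ K → (∀ i, i ≤ r → u i = i) → (utSeqMin K u r).2.1 = K + 1 + r
  | 0, _, h => by simp [utSeqMin, h 0 le_rfl]
  | r + 1, hrK, h => by
    simp only [utSeqMin, utSeqMin_X K u r,
      utSeqMin_T_id K u r (by omega) (fun i hi => h i (by omega)), h (r + 1) le_rfl]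
    omega

lemma utSeqMin_T_dev (K : ℕ) (u : ℕ → ℕ) (hb : ∀ i, i ≤ K → u i ≤ K)
    (hinj : ∀ r s, r ≤ K → s ≤ K → u r = u s → r = s) :
    ∀ r, r ≤ K → (∃ i, i ≤ r ∧ u i ≠ i) → (utSeqMin K u r).2.1 ≤ K + r
  | 0, _, hdev => by
    obtain ⟨i, hi, hne⟩ := hdev
    interval_cases i
    have := hb 0 (by omega)
    simp only [utSeqMin]
    omega
  | r + 1, hrK, hdev => by
    by_cases hpre : ∃ i, i ≤ r ∧ u i ≠ i
    · have := utSeqMin_T_dev K u hb hinj r (by omega) hpre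
      simp only [utSeqMin]
      omega
    · push_neg at hpre
      have hup : r + 2 ≤ u (r + 1) := by
        obtain ⟨i, hi, hne⟩ := hdev
        have hir : i = r + 1 := by
          by_contra hir
          exact hne (hpre i (by omega))
        subst hir
        by_contra hlt
        push_neg at hlt
        rcases Nat.lt_or_ge (u (r + 1)) (r + 1) with hc | hc
        · have := hinj (u (r + 1)) (r + 1) (by omega) (by omega)
            (by rw [hpre (u (r + 1)) (by omega)])
          omega
        · omega
      have hub := hb (r + 1) (by omega)
      simp only [utSeqMin, utSeqMin_X K u r]
      omega

end UTRef


section UTMain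

variable {S : Type u} [BipotentSemiring S] (a : S)

lemma utChainMax (hadd : ∀ p q, mpow a p + mpow a q = mpow a (max p q))
    (m : ℕ) (u : ℕ → ℕ) :
    ∀ r, utInv a (utSeqMax u r).1 (utSeqMax u r).2.1 (utSeqMax u r).2.2
      (natFold (· * ·) (fun j => utGen a 0 (u j + 1) 1 (m + 2)) r)
  | 0 =>
    ⟨utGenM_00 a 0 (u 0 + 1) 1 (m + 2) (by omega),
     utGenM_01 a 0 (u 0 + 1) 1 (m + 2) (by omega),
     utGenM_11 a 0 (u 0 + 1) 1 (m + 2) (by omega)⟩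
  | r + 1 => by
    have step := utInv_step a _ _ _ 0 (u (r + 1) + 1) 1 _ (utChainMax hadd m u r)
    have h2 := step.2.1
    rw [hadd] at h2
    exact ⟨step.1, h2, step.2.2⟩

lemma utChainMin (hadd : ∀ p q, mpow a p + mpow a q = mpow a (min p q))
    (K m : ℕ) (u : ℕ → ℕ) :
    ∀ r, utInv a (utSeqMin K u r).1 (utSeqMin K u r).2.1 (utSeqMin K u r).2.2
      (natFold (· * ·) (fun j => utGen a 1 ((K - u j) + 1) 0 (m + 2)) r)
  | 0 =>
    ⟨utGenM_00 a 1 ((K - u 0) + 1) 0 (m + 2) (by omega),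
     utGenM_01 a 1 ((K - u 0) + 1) 0 (m + 2) (by omega),
     utGenM_11 a 1 ((K - u 0) + 1) 0 (m + 2) (by omega)⟩
  | r + 1 => by
    have step := utInv_step a _ _ _ 1 ((K - u (r + 1)) + 1) 0 _ (utChainMin hadd K m u r)
    have h2 := step.2.1
    rw [hadd] at h2
    exact ⟨step.1, h2, step.2.2⟩

lemma ut_not_kperm (hmpinj : Function.Injective (mpow a))
    (hc : (∀ p q, mpow a p + mpow a q = mpow a (max p q)) ∨
          (∀ p q, mpow a p + mpow a q = mpow a (min p q)))
    (m K : ℕ) (hK : 1 ≤ K) : ¬ KPermutable (UTMat S (m + 2)) (K + 1) := by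
  intro hperm
  rcases hc with hadd | hadd
  · obtain ⟨σ, hσne, hσeq⟩ :=
      hperm (fun i : Fin (K + 1) => utGen a 0 (i.val + 1) 1 (m + 2))
    have hid : finProd (fun i : Fin (K + 1) => utGen a 0 (i.val + 1) 1 (m + 2))
        = some (natFold (· * ·) (fun j => utGen a 0 ((fun r => r) j + 1) 1 (m + 2)) K) :=
      finProd_natFold _ _ (fun r hr => rfl)
    have hσp : finProd (fun i : Fin (K + 1) => utGen a 0 ((σ i).val + 1) 1 (m + 2))
        = some (natFold (· * ·) (fun j => utGen a 0 (upad σ j + 1) 1 (m + 2)) K) :=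
      finProd_natFold _ _ (fun r hr => by simp only [upad]; rw [dif_pos hr])
    have heq := (hσp.symm.trans hσeq).trans hid
    have h3 := Option.some.inj heq
    have e1 := (utChainMax a hadd m (upad σ) K).2.1
    have e2 := (utChainMax a hadd m (fun r => r) K).2.1
    rw [h3, e2] at e1
    have hT : (utSeqMax (fun r => r) K).2.1 = (utSeqMax (upad σ) K).2.1 :=
      hmpinj (Adj0.elem.inj e1)
    have hTid := utSeqMax_T_id (fun r => r) K (fun i _ => rfl)
    have hTdev := utSeqMax_T_dev (upad σ) K (fun i hi => upad_le σ i hi)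
      (upad_inj σ) K le_rfl (upad_dev σ hσne)
    omega
  · obtain ⟨σ, hσne, hσeq⟩ :=
      hperm (fun i : Fin (K + 1) => utGen a 1 ((K - i.val) + 1) 0 (m + 2))
    have hid : finProd (fun i : Fin (K + 1) => utGen a 1 ((K - i.val) + 1) 0 (m + 2))
        = some (natFold (· * ·)
            (fun j => utGen a 1 ((K - (fun r => r) j) + 1) 0 (m + 2)) K) :=
      finProd_natFold _ _ (fun r hr => rfl)
    have hσp : finProd (fun i : Fin (K + 1) => utGen a 1 ((K - (σ i).val) + 1) 0 (m + 2))
        = some (natFold (· * ·) (fun j => utGen a 1 ((K - upad σ j) + 1) 0 (m + 2)) K) :=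
      finProd_natFold _ _ (fun r hr => by simp only [upad]; rw [dif_pos hr])
    have heq := (hσp.symm.trans hσeq).trans hid
    have h3 := Option.some.inj heq
    have e1 := (utChainMin a hadd K m (upad σ) K).2.1
    have e2 := (utChainMin a hadd K m (fun r => r) K).2.1
    rw [h3, e2] at e1
    have hT : (utSeqMin K (fun r => r) K).2.1 = (utSeqMin K (upad σ) K).2.1 :=
      hmpinj (Adj0.elem.inj e1)
    have hTid := utSeqMin_T_id K (fun r => r) K le_rfl (fun i _ => rfl)
    have hTdev := utSeqMin_T_dev K (upad σ) (fun i hi => upad_le σ i hi)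
      (upad_inj σ) K le_rfl (upad_dev σ hσne)
    omega

end UTMain


/-! ### The `U_n` construction -/

section UCore

variable {S : Type u} [BipotentSemiring S] (a : S)

/-- Unitriangular generator with (0,1)-exponent `b` and (1,2)-exponent `d`. -/
def uGenM (b d : ℕ) (n : ℕ) : MatSR (Adj01 S) n := fun i j =>
  if j.val < i.val then Adj01.zero
  else if i.val = j.val then Adj01.one
  else if i.val = 0 ∧ j.val = 1 then Adj01.elem (mpow a b)
  else if i.val = 1 ∧ j.val = 2 then Adj01.elem (mpow a d)
  else Adj01.zero

lemma uGenM_isU (b d n : ℕ) : IsU (uGenM a b d n) := by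
  refine ⟨?_, ?_, ?_⟩
  · intro i j hji
    simp only [uGenM, if_pos hji]
  · intro i
    simp [uGenM]
  · intro i j hij
    simp only [uGenM, if_neg (by omega : ¬ (j.val < i.val)),
      if_neg (by omega : ¬ (i.val = j.val))]
    split
    · exact fun h => nomatch h
    · split
      · exact fun h => nomatch h
      · exact fun h => nomatch h

def uGen (b d n : ℕ) : UMat S n := ⟨uGenM a b d n, uGenM_isU a b d n⟩

lemma uGenM_01 (b d n : ℕ) (h : 1 < n) :
    uGenM a b d n ⟨0, by omega⟩ ⟨1, h⟩ = Adj01.elem (mpow a b) := by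
  simp [uGenM]

lemma uGenM_12 (b d n : ℕ) (h : 2 < n) :
    uGenM a b d n ⟨1, by omega⟩ ⟨2, h⟩ = Adj01.elem (mpow a d) := by
  simp [uGenM]

lemma uGenM_02 (b d n : ℕ) (h : 2 < n) :
    uGenM a b d n ⟨0, by omega⟩ ⟨2, h⟩ = Adj01.zero := by
  simp [uGenM]

lemma uGenM_diag (b d n : ℕ) (i : Fin n) : uGenM a b d n i i = Adj01.one := by
  simp [uGenM]

lemma uGenM_lt (b d n : ℕ) (i j : Fin n) (hji : j.val < i.val) :
    uGenM a b d n i j = Adj01.zero := by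
  simp only [uGenM, if_pos hji]

/-- Interpretation of the optional (0,2)-data. -/
def crep (c : Option ℕ) : Adj01 S := c.elim Adj01.zero (fun t => Adj01.elem (mpow a t))

/-- Corner invariant for partial products in `U_n`. -/
def uInv (b d : ℕ) (c : Option ℕ) {m : ℕ} (Q : UMat S (m + 3)) : Prop :=
  Q.1 ⟨0, by omega⟩ ⟨1, by omega⟩ = Adj01.elem (mpow a b) ∧
  Q.1 ⟨1, by omega⟩ ⟨2, by omega⟩ = Adj01.elem (mpow a d) ∧
  Q.1 ⟨0, by omega⟩ ⟨2, by omega⟩ = crep a c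

lemma uInv_step {m : ℕ} (b d : ℕ) (c : Option ℕ) (b' d' : ℕ) (Q : UMat S (m + 3))
    (h : uInv a b d c Q) :
    (Q * uGen a b' d' (m + 3)).1 ⟨0, by omega⟩ ⟨1, by omega⟩
        = Adj01.elem (mpow a b' + mpow a b) ∧
    (Q * uGen a b' d' (m + 3)).1 ⟨1, by omega⟩ ⟨2, by omega⟩
        = Adj01.elem (mpow a d' + mpow a d) ∧
    (Q * uGen a b' d' (m + 3)).1 ⟨0, by omega⟩ ⟨2, by omega⟩
        = Adj01.elem (mpow a (b + d' + 1)) + crep a c := by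
  obtain ⟨h01, h12, h02⟩ := h
  have hd0 : Q.1 ⟨0, by omega⟩ ⟨0, by omega⟩ = Adj01.one := Q.2.2.1 _
  have hd1 : Q.1 ⟨1, by omega⟩ ⟨1, by omega⟩ = Adj01.one := Q.2.2.1 _
  have hmul : (Q * uGen a b' d' (m + 3)).1 = matMul Q.1 (uGenM a b' d' (m + 3)) := rfl
  refine ⟨?_, ?_, ?_⟩
  · rw [hmul, matMul_natFold Q.1 _ _ _
      (g := fun r => if r = 0 then Adj01.elem (mpow a b')
        else if r = 1 then Adj01.elem (mpow a b) else Adj01.zero) ?_]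
    · rw [natFold_pair01 _ _ Adj01.zero Adj01.add_zero (m + 2) (by omega)
        (fun r h1 h2 => by
          show (if r = 0 then _ else if r = 1 then _ else Adj01.zero) = Adj01.zero
          rw [if_neg (by omega), if_neg (by omega)])]
      simp
    · intro r hr
      show Q.1 _ _ * _ = if r = 0 then Adj01.elem (mpow a b')
        else if r = 1 then Adj01.elem (mpow a b) else Adj01.zero
      rcases Nat.eq_zero_or_pos r with rfl | hrpos
      · rw [if_pos rfl, show (⟨0, hr⟩ : Fin (m + 3)) = ⟨0, by omega⟩ from rfl, hd0,
          uGenM_01 a b' d' (m + 3) (by omega), Adj01.one_mul]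
      rcases Nat.eq_or_lt_of_le hrpos with rfl | hr2
      · rw [if_neg (by omega), if_pos rfl,
          show (⟨1, hr⟩ : Fin (m + 3)) = ⟨1, by omega⟩ from rfl, h01,
          show uGenM a b' d' (m + 3) ⟨1, by omega⟩ ⟨1, by omega⟩ = Adj01.one from
            uGenM_diag a b' d' (m + 3) _, Adj01.mul_one]
      · rw [if_neg (by omega), if_neg (by omega),
          uGenM_lt a b' d' (m + 3) ⟨r, hr⟩ ⟨1, by omega⟩ (by simpa using hr2),
          Adj01.mul_zero]
  · rw [hmul, matMul_natFold Q.1 _ _ _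
      (g := fun r => if r = 1 then Adj01.elem (mpow a d')
        else if r = 2 then Adj01.elem (mpow a d) else Adj01.zero) ?_]
    · rw [natFold_triple012 _ _ Adj01.zero Adj01.add_zero (m + 2) (by omega)
        (fun r h1 h2 => by
          show (if r = 1 then _ else if r = 2 then _ else Adj01.zero) = Adj01.zero
          rw [if_neg (by omega), if_neg (by omega)])]
      simp
    · intro r hr
      show Q.1 _ _ * _ = if r = 1 then Adj01.elem (mpow a d')
        else if r = 2 then Adj01.elem (mpow a d) else Adj01.zero
      rcases Nat.eq_zero_or_pos r with rfl | hrpos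
      · rw [if_neg (by omega), if_neg (by omega),
          Q.2.1 ⟨1, by omega⟩ ⟨0, hr⟩ (by simp), Adj01.zero_mul]
      rcases Nat.eq_or_lt_of_le hrpos with rfl | hr2
      · rw [if_pos rfl, show (⟨1, hr⟩ : Fin (m + 3)) = ⟨1, by omega⟩ from rfl, hd1,
          uGenM_12 a b' d' (m + 3) (by omega), Adj01.one_mul]
      rcases Nat.eq_or_lt_of_le hr2 with rfl | hr3
      · rw [if_neg (by omega), if_pos rfl,
          show (⟨2, hr⟩ : Fin (m + 3)) = ⟨2, by omega⟩ from rfl, h12,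
          show uGenM a b' d' (m + 3) ⟨2, by omega⟩ ⟨2, by omega⟩ = Adj01.one from
            uGenM_diag a b' d' (m + 3) _, Adj01.mul_one]
      · rw [if_neg (by omega), if_neg (by omega),
          uGenM_lt a b' d' (m + 3) ⟨r, hr⟩ ⟨2, by omega⟩ (by simpa using hr3),
          Adj01.mul_zero]
  · rw [hmul, matMul_natFold Q.1 _ _ _
      (g := fun r => if r = 1 then Adj01.elem (mpow a (b + d' + 1))
        else if r = 2 then crep a c else Adj01.zero) ?_]
    · rw [natFold_triple012 _ _ Adj01.zero Adj01.add_zero (m + 2) (by omega)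
        (fun r h1 h2 => by
          show (if r = 1 then _ else if r = 2 then _ else Adj01.zero) = Adj01.zero
          rw [if_neg (by omega), if_neg (by omega)])]
      simp
    · intro r hr
      show Q.1 _ _ * _ = if r = 1 then Adj01.elem (mpow a (b + d' + 1))
        else if r = 2 then crep a c else Adj01.zero
      rcases Nat.eq_zero_or_pos r with rfl | hrpos
      · rw [if_neg (by omega), if_neg (by omega),
          show (⟨0, hr⟩ : Fin (m + 3)) = ⟨0, by omega⟩ from rfl, hd0,
          uGenM_02 a b' d' (m + 3) (by omega), Adj01.one_mul]
      rcases Nat.eq_or_lt_of_le hrpos with rfl | hr2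
      · rw [if_pos rfl, show (⟨1, hr⟩ : Fin (m + 3)) = ⟨1, by omega⟩ from rfl, h01,
          uGenM_12 a b' d' (m + 3) (by omega)]
        simp [mpow_mul_mpow]
      rcases Nat.eq_or_lt_of_le hr2 with rfl | hr3
      · rw [if_neg (by omega), if_pos rfl,
          show (⟨2, hr⟩ : Fin (m + 3)) = ⟨2, by omega⟩ from rfl, h02,
          show uGenM a b' d' (m + 3) ⟨2, by omega⟩ ⟨2, by omega⟩ = Adj01.one from
            uGenM_diag a b' d' (m + 3) _, Adj01.mul_one]
      · rw [if_neg (by omega), if_neg (by omega),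
          uGenM_lt a b' d' (m + 3) ⟨r, hr⟩ ⟨2, by omega⟩ (by simpa using hr3),
          Adj01.mul_zero]

end UCore


/-! ### The `U_n` refutation -/

section URef

/-- Data sequence for `U_n`, increasing case. -/
def uSeqMax (K : ℕ) (u : ℕ → ℕ) : ℕ → ℕ × ℕ × Option ℕ
  | 0 => (u 0, K - u 0, none)
  | r + 1 =>
    (max (u (r + 1)) (uSeqMax K u r).1,
     max (K - u (r + 1)) (uSeqMax K u r).2.1,
     some ((uSeqMax K u r).2.2.elim ((uSeqMax K u r).1 + (K - u (r + 1)) + 1)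
       (fun t => max ((uSeqMax K u r).1 + (K - u (r + 1)) + 1) t)))

lemma uSeqMax_b_id (K : ℕ) (u : ℕ → ℕ) :
    ∀ r, (∀ i, i ≤ r → u i = i) → (uSeqMax K u r).1 = r
  | 0, h => h 0 le_rfl
  | r + 1, h => by
    simp only [uSeqMax, uSeqMax_b_id K u r (fun i hi => h i (by omega)),
      h (r + 1) le_rfl]
    omega

lemma uSeqMax_b_ub (K : ℕ) (u : ℕ → ℕ) :
    ∀ r i, i ≤ r → u i ≤ (uSeqMax K u r).1
  | 0, i, hi => by
    interval_cases i
    exact le_rfl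
  | r + 1, i, hi => by
    simp only [uSeqMax]
    rcases Nat.lt_or_ge i (r + 1) with h | h
    · have := uSeqMax_b_ub K u r i (by omega)
      omega
    · have : i = r + 1 := by omega
      subst this
      omega

lemma uSeqMax_c_id (K : ℕ) (u : ℕ → ℕ) :
    ∀ r, 1 ≤ r → r + 1 ≤ K + 1 → (∀ i, i ≤ r → u i = i) →
      (uSeqMax K u r).2.2 = some K
  | 0, h, _, _ => by omega
  | 1, _, hK, h => by
    simp only [uSeqMax, Option.elim_none, Option.elim_some, h 0 (by omega), h 1 (by omega)]
    exact congrArg some (by omega)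
  | r + 2, _, hK, h => by
    have hc := uSeqMax_c_id K u (r + 1) (by omega) (by omega) (fun i hi => h i (by omega))
    have hb := uSeqMax_b_id K u (r + 1) (fun i hi => h i (by omega))
    have heq : (uSeqMax K u (r + 2)).2.2
        = some ((uSeqMax K u (r + 1)).2.2.elim
            ((uSeqMax K u (r + 1)).1 + (K - u (r + 2)) + 1)
            (fun t => max ((uSeqMax K u (r + 1)).1 + (K - u (r + 2)) + 1) t)) := rfl
    rw [heq, hc, hb, h (r + 2) le_rfl, Option.elim_some]
    exact congrArg some (by omega)

lemma uSeqMax_c_dev (K : ℕ) (u : ℕ → ℕ) (hb : ∀ i, i ≤ K → u i ≤ K) :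
    ∀ r, r ≤ K → (∃ i j, i < j ∧ j ≤ r ∧ u j < u i) →
      ∃ t, (uSeqMax K u r).2.2 = some t ∧ K + 2 ≤ t
  | 0, _, hdev => by
    obtain ⟨i, j, hij, hj, _⟩ := hdev
    omega
  | r + 1, hrK, hdev => by
    obtain ⟨i, j, hij, hj, hlt⟩ := hdev
    by_cases hjr : j ≤ r
    · obtain ⟨t, hct, hge⟩ := uSeqMax_c_dev K u hb r (by omega) ⟨i, j, hij, hjr, hlt⟩
      simp only [uSeqMax, hct, Option.elim_none, Option.elim_some]
      exact ⟨_, rfl, le_trans hge (le_max_right _ _)⟩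
    · have hj1 : j = r + 1 := by omega
      subst hj1
      have hbi := uSeqMax_b_ub K u r i (by omega)
      have hiK := hb i (by omega)
      have hrK1 := hb (r + 1) (by omega)
      have hv : K + 2 ≤ (uSeqMax K u r).1 + (K - u (r + 1)) + 1 := by omega
      rcases hct : (uSeqMax K u r).2.2 with _ | t
      · simp only [uSeqMax, hct, Option.elim_none, Option.elim_some]
        exact ⟨_, rfl, hv⟩
      · simp only [uSeqMax, hct, Option.elim_none, Option.elim_some]
        exact ⟨_, rfl, le_trans hv (le_max_left _ _)⟩

/-- Data sequence for `U_n`, decreasing case. -/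
def uSeqMin (K : ℕ) (u : ℕ → ℕ) : ℕ → ℕ × ℕ × Option ℕ
  | 0 => (K - u 0, u 0, none)
  | r + 1 =>
    (min (K - u (r + 1)) (uSeqMin K u r).1,
     min (u (r + 1)) (uSeqMin K u r).2.1,
     some ((uSeqMin K u r).2.2.elim ((uSeqMin K u r).1 + u (r + 1) + 1)
       (fun t => min ((uSeqMin K u r).1 + u (r + 1) + 1) t)))

lemma uSeqMin_b_id (K : ℕ) (u : ℕ → ℕ) :
    ∀ r, r ≤ K → (∀ i, i ≤ r → u i = i) → (uSeqMin K u r).1 = K - r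
  | 0, _, h => by simp only [uSeqMin, h 0 le_rfl]
  | r + 1, hrK, h => by
    simp only [uSeqMin, uSeqMin_b_id K u r (by omega) (fun i hi => h i (by omega)),
      h (r + 1) le_rfl]
    omega

lemma uSeqMin_b_lb (K : ℕ) (u : ℕ → ℕ) :
    ∀ r i, i ≤ r → (uSeqMin K u r).1 ≤ K - u i
  | 0, i, hi => by
    interval_cases i
    exact le_rfl
  | r + 1, i, hi => by
    simp only [uSeqMin]
    rcases Nat.lt_or_ge i (r + 1) with h | h
    · have := uSeqMin_b_lb K u r i (by omega)
      omega
    · have : i = r + 1 := by omega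
      subst this
      omega

lemma uSeqMin_c_id (K : ℕ) (u : ℕ → ℕ) :
    ∀ r, 1 ≤ r → r + 1 ≤ K + 1 → (∀ i, i ≤ r → u i = i) →
      (uSeqMin K u r).2.2 = some (K + 2)
  | 0, h, _, _ => by omega
  | 1, _, hK, h => by
    simp only [uSeqMin, Option.elim_none, Option.elim_some, h 0 (by omega), h 1 (by omega)]
    exact congrArg some (by omega)
  | r + 2, _, hK, h => by
    have hc := uSeqMin_c_id K u (r + 1) (by omega) (by omega) (fun i hi => h i (by omega))
    have hb := uSeqMin_b_id K u (r + 1) (by omega) (fun i hi => h i (by omega))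
    have heq : (uSeqMin K u (r + 2)).2.2
        = some ((uSeqMin K u (r + 1)).2.2.elim
            ((uSeqMin K u (r + 1)).1 + u (r + 2) + 1)
            (fun t => min ((uSeqMin K u (r + 1)).1 + u (r + 2) + 1) t)) := rfl
    rw [heq, hc, hb, h (r + 2) le_rfl, Option.elim_some]
    exact congrArg some (by omega)

lemma uSeqMin_c_dev (K : ℕ) (u : ℕ → ℕ) (hb : ∀ i, i ≤ K → u i ≤ K) :
    ∀ r, r ≤ K → (∃ i j, i < j ∧ j ≤ r ∧ u j < u i) →
      ∃ t, (uSeqMin K u r).2.2 = some t ∧ t ≤ K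
  | 0, _, hdev => by
    obtain ⟨i, j, hij, hj, _⟩ := hdev
    omega
  | r + 1, hrK, hdev => by
    obtain ⟨i, j, hij, hj, hlt⟩ := hdev
    by_cases hjr : j ≤ r
    · obtain ⟨t, hct, hge⟩ := uSeqMin_c_dev K u hb r (by omega) ⟨i, j, hij, hjr, hlt⟩
      simp only [uSeqMin, hct, Option.elim_none, Option.elim_some]
      exact ⟨_, rfl, le_trans (min_le_right _ _) hge⟩
    · have hj1 : j = r + 1 := by omega
      subst hj1
      have hbi := uSeqMin_b_lb K u r i (by omega)
      have hiK := hb i (by omega)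
      have hrK1 := hb (r + 1) (by omega)
      have hv : (uSeqMin K u r).1 + u (r + 1) + 1 ≤ K := by omega
      rcases hct : (uSeqMin K u r).2.2 with _ | t
      · simp only [uSeqMin, hct, Option.elim_none, Option.elim_some]
        exact ⟨_, rfl, hv⟩
      · simp only [uSeqMin, hct, Option.elim_none, Option.elim_some]
        exact ⟨_, rfl, le_trans (min_le_left _ _) hv⟩

end URef

section UMain

variable {S : Type u} [BipotentSemiring S] (a : S)

lemma uChainMax (hadd : ∀ p q, mpow a p + mpow a q = mpow a (max p q))
    (K m : ℕ) (u : ℕ → ℕ) :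
    ∀ r, uInv a (uSeqMax K u r).1 (uSeqMax K u r).2.1 (uSeqMax K u r).2.2
      (natFold (· * ·) (fun j => uGen a (u j) (K - u j) (m + 3)) r)
  | 0 =>
    ⟨uGenM_01 a (u 0) (K - u 0) (m + 3) (by omega),
     uGenM_12 a (u 0) (K - u 0) (m + 3) (by omega),
     uGenM_02 a (u 0) (K - u 0) (m + 3) (by omega)⟩
  | r + 1 => by
    have step := uInv_step a _ _ _ (u (r + 1)) (K - u (r + 1)) _ (uChainMax hadd K m u r)
    have h1 := step.1
    have h2 := step.2.1
    have h3 := step.2.2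
    rw [hadd] at h1 h2
    refine ⟨h1, h2, ?_⟩
    rcases hct : (uSeqMax K u r).2.2 with _ | t
    · rw [hct] at h3
      show _ = crep a (some ((uSeqMax K u r).2.2.elim _ _))
      rw [hct]
      simpa [crep, natFold] using h3
    · rw [hct] at h3
      simp only [crep, Option.elim_none, Option.elim_some, Adj01.elem_add_elem, hadd] at h3
      show _ = crep a (some ((uSeqMax K u r).2.2.elim _ _))
      rw [hct]
      simpa [crep, natFold] using h3

lemma uChainMin (hadd : ∀ p q, mpow a p + mpow a q = mpow a (min p q))
    (K m : ℕ) (u : ℕ → ℕ) :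
    ∀ r, uInv a (uSeqMin K u r).1 (uSeqMin K u r).2.1 (uSeqMin K u r).2.2
      (natFold (· * ·) (fun j => uGen a (K - u j) (u j) (m + 3)) r)
  | 0 =>
    ⟨uGenM_01 a (K - u 0) (u 0) (m + 3) (by omega),
     uGenM_12 a (K - u 0) (u 0) (m + 3) (by omega),
     uGenM_02 a (K - u 0) (u 0) (m + 3) (by omega)⟩
  | r + 1 => by
    have step := uInv_step a _ _ _ (K - u (r + 1)) (u (r + 1)) _ (uChainMin hadd K m u r)
    have h1 := step.1
    have h2 := step.2.1
    have h3 := step.2.2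
    rw [hadd] at h1 h2
    refine ⟨h1, h2, ?_⟩
    rcases hct : (uSeqMin K u r).2.2 with _ | t
    · rw [hct] at h3
      show _ = crep a (some ((uSeqMin K u r).2.2.elim _ _))
      rw [hct]
      simpa [crep, natFold] using h3
    · rw [hct] at h3
      simp only [crep, Option.elim_none, Option.elim_some, Adj01.elem_add_elem, hadd] at h3
      show _ = crep a (some ((uSeqMin K u r).2.2.elim _ _))
      rw [hct]
      simpa [crep, natFold] using h3

lemma u_not_kperm (hmpinj : Function.Injective (mpow a))
    (hc : (∀ p q, mpow a p + mpow a q = mpow a (max p q)) ∨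
          (∀ p q, mpow a p + mpow a q = mpow a (min p q)))
    (m K : ℕ) (hK : 1 ≤ K) : ¬ KPermutable (UMat S (m + 3)) (K + 1) := by
  intro hperm
  rcases hc with hadd | hadd
  · obtain ⟨σ, hσne, hσeq⟩ :=
      hperm (fun i : Fin (K + 1) => uGen a i.val (K - i.val) (m + 3))
    have hid : finProd (fun i : Fin (K + 1) => uGen a i.val (K - i.val) (m + 3))
        = some (natFold (· * ·)
            (fun j => uGen a ((fun r => r) j) (K - (fun r => r) j) (m + 3)) K) :=
      finProd_natFold _ _ (fun r hr => rfl)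
    have hσp : finProd (fun i : Fin (K + 1) => uGen a (σ i).val (K - (σ i).val) (m + 3))
        = some (natFold (· * ·) (fun j => uGen a (upad σ j) (K - upad σ j) (m + 3)) K) :=
      finProd_natFold _ _ (fun r hr => by simp only [upad]; rw [dif_pos hr])
    have heq := (hσp.symm.trans hσeq).trans hid
    have h3 := Option.some.inj heq
    have e1 := (uChainMax a hadd K m (upad σ) K).2.2
    have e2 := (uChainMax a hadd K m (fun r => r) K).2.2
    rw [h3, e2] at e1
    obtain ⟨t, hct, hge⟩ := uSeqMax_c_dev K (upad σ) (fun i hi => upad_le σ i hi) K le_rfl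
      (exists_inversion (upad σ) K (upad_inj σ) (upad_surj σ) (upad_dev σ hσne))
    rw [uSeqMax_c_id K (fun r => r) K (by omega) (by omega) (fun i _ => rfl), hct] at e1
    have := hmpinj (Adj01.elem.inj e1)
    omega
  · obtain ⟨σ, hσne, hσeq⟩ :=
      hperm (fun i : Fin (K + 1) => uGen a (K - i.val) i.val (m + 3))
    have hid : finProd (fun i : Fin (K + 1) => uGen a (K - i.val) i.val (m + 3))
        = some (natFold (· * ·)
            (fun j => uGen a (K - (fun r => r) j) ((fun r => r) j) (m + 3)) K) :=
      finProd_natFold _ _ (fun r hr => rfl)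
    have hσp : finProd (fun i : Fin (K + 1) => uGen a (K - (σ i).val) (σ i).val (m + 3))
        = some (natFold (· * ·) (fun j => uGen a (K - upad σ j) (upad σ j) (m + 3)) K) :=
      finProd_natFold _ _ (fun r hr => by simp only [upad]; rw [dif_pos hr])
    have heq := (hσp.symm.trans hσeq).trans hid
    have h3 := Option.some.inj heq
    have e1 := (uChainMin a hadd K m (upad σ) K).2.2
    have e2 := (uChainMin a hadd K m (fun r => r) K).2.2
    rw [h3, e2] at e1
    obtain ⟨t, hct, hge⟩ := uSeqMin_c_dev K (upad σ) (fun i hi => upad_le σ i hi) K le_rfl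
      (exists_inversion (upad σ) K (upad_inj σ) (upad_surj σ) (upad_dev σ hσne))
    rw [uSeqMin_c_id K (fun r => r) K (by omega) (by omega) (fun i _ => rfl), hct] at e1
    have := hmpinj (Adj01.elem.inj e1)
    omega

end UMain


/-! ### The `M_n` construction -/

section MCore

variable {S : Type u} [BipotentSemiring S] (a : S)

/-- Rank-one matrix with row vector indexed by `p`, column vector by `q`, and
scalar shift `cc`. -/
def mRep (u0 u1 v0 v1 : ℕ → ℕ) (p q cc : ℕ) (n : ℕ) : MatSR S n := fun i j =>
  mpow a ((if i.val = 0 then u0 p else u1 p) + cc + (if j.val = 0 then v0 q else v1 q))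

lemma mRep_step_max (hadd : ∀ p q, mpow a p + mpow a q = mpow a (max p q))
    (u0 u1 v0 v1 : ℕ → ℕ) (m p q cc t : ℕ) :
    matMul (mRep a u0 u1 v0 v1 p q cc (m + 2)) (mRep a u0 u1 v0 v1 t t 0 (m + 2))
      = mRep a u0 u1 v0 v1 p t (cc + max (v0 q + u0 t) (v1 q + u1 t) + 1) (m + 2) := by
  funext i j
  rw [matMul_natFold _ _ i j (g := fun r => if r = 0
      then mpow a (((if i.val = 0 then u0 p else u1 p) + cc + v0 q)
        + (u0 t + 0 + (if j.val = 0 then v0 t else v1 t)) + 1)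
      else mpow a (((if i.val = 0 then u0 p else u1 p) + cc + v1 q)
        + (u1 t + 0 + (if j.val = 0 then v0 t else v1 t)) + 1)) ?_]
  · set X := (if (i : Fin (m + 2)).val = 0 then u0 p else u1 p) with hX
    set Y := (if (j : Fin (m + 2)).val = 0 then v0 t else v1 t) with hY
    have habs : (mpow a (X + cc + v0 q + (u0 t + 0 + Y) + 1)
          + mpow a (X + cc + v1 q + (u1 t + 0 + Y) + 1))
          + mpow a (X + cc + v1 q + (u1 t + 0 + Y) + 1)
        = mpow a (X + cc + v0 q + (u0 t + 0 + Y) + 1)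
          + mpow a (X + cc + v1 q + (u1 t + 0 + Y) + 1) := by
      rw [hadd, hadd]
      exact congrArg (mpow a) (by omega)
    rw [natFold_two_block (· + ·)
      (fun r => if r = 0 then mpow a (X + cc + v0 q + (u0 t + 0 + Y) + 1)
        else mpow a (X + cc + v1 q + (u1 t + 0 + Y) + 1)) _ _
      habs (if_pos rfl) (fun r hr => if_neg (by omega)) (m + 1) (by omega), hadd]
    show mpow a _ = mpow a (X + (cc + max (v0 q + u0 t) (v1 q + u1 t) + 1) + Y)
    exact congrArg (mpow a) (by omega)
  · intro r hr
    show mpow a ((if i.val = 0 then u0 p else u1 p) + cc + (if r = 0 then v0 q else v1 q)) *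
      mpow a ((if r = 0 then u0 t else u1 t) + 0 + (if j.val = 0 then v0 t else v1 t)) = _
    by_cases hr0 : r = 0
    · simp only [if_pos hr0]
      exact mpow_mul_mpow a _ _
    · simp only [if_neg hr0]
      exact mpow_mul_mpow a _ _

lemma mRep_step_min (hadd : ∀ p q, mpow a p + mpow a q = mpow a (min p q))
    (u0 u1 v0 v1 : ℕ → ℕ) (m p q cc t : ℕ) :
    matMul (mRep a u0 u1 v0 v1 p q cc (m + 2)) (mRep a u0 u1 v0 v1 t t 0 (m + 2))
      = mRep a u0 u1 v0 v1 p t (cc + min (v0 q + u0 t) (v1 q + u1 t) + 1) (m + 2) := by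
  funext i j
  rw [matMul_natFold _ _ i j (g := fun r => if r = 0
      then mpow a (((if i.val = 0 then u0 p else u1 p) + cc + v0 q)
        + (u0 t + 0 + (if j.val = 0 then v0 t else v1 t)) + 1)
      else mpow a (((if i.val = 0 then u0 p else u1 p) + cc + v1 q)
        + (u1 t + 0 + (if j.val = 0 then v0 t else v1 t)) + 1)) ?_]
  · set X := (if (i : Fin (m + 2)).val = 0 then u0 p else u1 p) with hX
    set Y := (if (j : Fin (m + 2)).val = 0 then v0 t else v1 t) with hY
    have habs : (mpow a (X + cc + v0 q + (u0 t + 0 + Y) + 1)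
          + mpow a (X + cc + v1 q + (u1 t + 0 + Y) + 1))
          + mpow a (X + cc + v1 q + (u1 t + 0 + Y) + 1)
        = mpow a (X + cc + v0 q + (u0 t + 0 + Y) + 1)
          + mpow a (X + cc + v1 q + (u1 t + 0 + Y) + 1) := by
      rw [hadd, hadd]
      exact congrArg (mpow a) (by omega)
    rw [natFold_two_block (· + ·)
      (fun r => if r = 0 then mpow a (X + cc + v0 q + (u0 t + 0 + Y) + 1)
        else mpow a (X + cc + v1 q + (u1 t + 0 + Y) + 1)) _ _
      habs (if_pos rfl) (fun r hr => if_neg (by omega)) (m + 1) (by omega), hadd]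
    show mpow a _ = mpow a (X + (cc + min (v0 q + u0 t) (v1 q + u1 t) + 1) + Y)
    exact congrArg (mpow a) (by omega)
  · intro r hr
    show mpow a ((if i.val = 0 then u0 p else u1 p) + cc + (if r = 0 then v0 q else v1 q)) *
      mpow a ((if r = 0 then u0 t else u1 t) + 0 + (if j.val = 0 then v0 t else v1 t)) = _
    by_cases hr0 : r = 0
    · simp only [if_pos hr0]
      exact mpow_mul_mpow a _ _
    · simp only [if_neg hr0]
      exact mpow_mul_mpow a _ _

end MCore

/-! ### The `M_n` refutation -/

section MRef

/-- Scalar sequence for `M_n`, increasing case: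
`u0 p = p`, `u1 p = K - p`, `v0 q = K - q`, `v1 q = q`. -/
def mSeqMax (K : ℕ) (u : ℕ → ℕ) : ℕ → ℕ
  | 0 => 0
  | r + 1 => mSeqMax K u r
      + max ((K - u r) + u (r + 1)) (u r + (K - u (r + 1))) + 1

lemma mSeqMax_id (K : ℕ) (u : ℕ → ℕ) :
    ∀ r, r ≤ K → (∀ i, i ≤ r → u i = i) → mSeqMax K u r = r * (K + 2)
  | 0, _, _ => by simp [mSeqMax]
  | r + 1, hrK, h => by
    simp only [mSeqMax, mSeqMax_id K u r (by omega) (fun i hi => h i (by omega)),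
      h r (by omega), h (r + 1) le_rfl]
    have : (K - r) + (r + 1) = K + 1 := by omega
    rw [this]
    have : r + (K - (r + 1)) = K - 1 := by omega
    rw [this]
    have : max (K + 1) (K - 1) = K + 1 := by omega
    rw [this]
    ring

lemma mSeqMax_lb (K : ℕ) (u : ℕ → ℕ) (hb : ∀ i, i ≤ K → u i ≤ K) :
    ∀ r, r ≤ K → r * (K + 1) + u r ≤ mSeqMax K u r + u 0
  | 0, _ => by simp [mSeqMax]
  | r + 1, hrK => by
    have ih := mSeqMax_lb K u hb r (by omega)
    have h1 := hb r (by omega)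
    have h2 := hb (r + 1) (by omega)
    simp only [mSeqMax]
    have hw : (K - u r) + u (r + 1)
        ≤ max ((K - u r) + u (r + 1)) (u r + (K - u (r + 1))) := le_max_left _ _
    have hxp : (r + 1) * (K + 1) = r * (K + 1) + (K + 1) := by ring
    omega

lemma mSeqMax_lb_dev (K : ℕ) (u : ℕ → ℕ) (hb : ∀ i, i ≤ K → u i ≤ K) :
    ∀ r, r ≤ K → (∃ i, i < r ∧ u (i + 1) < u i) →
      r * (K + 1) + u r + 2 ≤ mSeqMax K u r + u 0
  | 0, _, hdev => by
    obtain ⟨i, hi, _⟩ := hdev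
    omega
  | r + 1, hrK, hdev => by
    have h1 := hb r (by omega)
    have h2 := hb (r + 1) (by omega)
    by_cases hpre : ∃ i, i < r ∧ u (i + 1) < u i
    · have ih := mSeqMax_lb_dev K u hb r (by omega) hpre
      simp only [mSeqMax]
      have hw : (K - u r) + u (r + 1)
          ≤ max ((K - u r) + u (r + 1)) (u r + (K - u (r + 1))) := le_max_left _ _
      have hxp : (r + 1) * (K + 1) = r * (K + 1) + (K + 1) := by ring
      omega
    · obtain ⟨i, hi, hdesc⟩ := hdev
      have hir : i = r := by
        by_contra hir
        exact hpre ⟨i, by omega, hdesc⟩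
      rw [hir] at hdesc
      have ih := mSeqMax_lb K u hb r (by omega)
      simp only [mSeqMax]
      have hw : u r + (K - u (r + 1))
          ≤ max ((K - u r) + u (r + 1)) (u r + (K - u (r + 1))) := le_max_right _ _
      have hxp : (r + 1) * (K + 1) = r * (K + 1) + (K + 1) := by ring
      omega

/-- Scalar sequence for `M_n`, decreasing case:
`u0 p = K - p`, `u1 p = K + p`, `v0 q = K + q`, `v1 q = K - q`. -/
def mSeqMin (K : ℕ) (u : ℕ → ℕ) : ℕ → ℕ
  | 0 => 0
  | r + 1 => mSeqMin K u r
      + min ((K + u r) + (K - u (r + 1))) ((K - u r) + (K + u (r + 1))) + 1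

lemma mSeqMin_id (K : ℕ) (u : ℕ → ℕ) :
    ∀ r, r ≤ K → (∀ i, i ≤ r → u i = i) → mSeqMin K u r = r * (2 * K)
  | 0, _, _ => by simp [mSeqMin]
  | r + 1, hrK, h => by
    simp only [mSeqMin, mSeqMin_id K u r (by omega) (fun i hi => h i (by omega)),
      h r (by omega), h (r + 1) le_rfl]
    have e1 : (K + r) + (K - (r + 1)) = 2 * K - 1 := by omega
    rw [e1]
    have e2 : (K - r) + (K + (r + 1)) = 2 * K + 1 := by omega
    rw [e2]
    have e3 : min (2 * K - 1) (2 * K + 1) = 2 * K - 1 := by omega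
    rw [e3]
    have hK : 1 ≤ K := by omega
    cases K with
    | zero => omega
    | succ K' => ring_nf; omega

lemma mSeqMin_ub (K : ℕ) (u : ℕ → ℕ) (hb : ∀ i, i ≤ K → u i ≤ K) :
    ∀ r, r ≤ K → mSeqMin K u r + u r ≤ r * (2 * K + 1) + u 0
  | 0, _ => by simp [mSeqMin]
  | r + 1, hrK => by
    have ih := mSeqMin_ub K u hb r (by omega)
    have h1 := hb r (by omega)
    have h2 := hb (r + 1) (by omega)
    simp only [mSeqMin]
    have hw : min ((K + u r) + (K - u (r + 1))) ((K - u r) + (K + u (r + 1)))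
        ≤ (K - u r) + (K + u (r + 1)) := min_le_right _ _
    have hxp : (r + 1) * (2 * K + 1) = r * (2 * K + 1) + (2 * K + 1) := by ring
    omega

lemma mSeqMin_ub_dev (K : ℕ) (u : ℕ → ℕ) (hb : ∀ i, i ≤ K → u i ≤ K) :
    ∀ r, r ≤ K → (∃ i, i < r ∧ u (i + 1) < u i) →
      mSeqMin K u r + u r + 2 ≤ r * (2 * K + 1) + u 0
  | 0, _, hdev => by
    obtain ⟨i, hi, _⟩ := hdev
    omega
  | r + 1, hrK, hdev => by
    have h1 := hb r (by omega)
    have h2 := hb (r + 1) (by omega)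
    by_cases hpre : ∃ i, i < r ∧ u (i + 1) < u i
    · have ih := mSeqMin_ub_dev K u hb r (by omega) hpre
      simp only [mSeqMin]
      have hw : min ((K + u r) + (K - u (r + 1))) ((K - u r) + (K + u (r + 1)))
          ≤ (K - u r) + (K + u (r + 1)) := min_le_right _ _
      have hxp : (r + 1) * (2 * K + 1) = r * (2 * K + 1) + (2 * K + 1) := by ring
      omega
    · obtain ⟨i, hi, hdesc⟩ := hdev
      have hir : i = r := by
        by_contra hir
        exact hpre ⟨i, by omega, hdesc⟩
      rw [hir] at hdesc
      have ih := mSeqMin_ub K u hb r (by omega)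
      simp only [mSeqMin]
      have hw : min ((K + u r) + (K - u (r + 1))) ((K - u r) + (K + u (r + 1)))
          ≤ (K + u r) + (K - u (r + 1)) := min_le_left _ _
      have hxp : (r + 1) * (2 * K + 1) = r * (2 * K + 1) + (2 * K + 1) := by ring
      omega

end MRef

section MMain

variable {S : Type u} [BipotentSemiring S] (a : S)

lemma mChainMax (hadd : ∀ p q, mpow a p + mpow a q = mpow a (max p q)) (K m : ℕ)
    (u : ℕ → ℕ) :
    ∀ r, natFold (· * ·)
        (fun j => mRep a (fun p => p) (fun p => K - p) (fun q => K - q) (fun q => q)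
          (u j) (u j) 0 (m + 2)) r
      = mRep a (fun p => p) (fun p => K - p) (fun q => K - q) (fun q => q)
          (u 0) (u r) (mSeqMax K u r) (m + 2)
  | 0 => rfl
  | r + 1 => by
    show natFold _ _ r * _ = _
    rw [mChainMax hadd K m u r]
    exact mRep_step_max a hadd _ _ _ _ m (u 0) (u r) (mSeqMax K u r) (u (r + 1))

lemma mChainMin (hadd : ∀ p q, mpow a p + mpow a q = mpow a (min p q)) (K m : ℕ)
    (u : ℕ → ℕ) :
    ∀ r, natFold (· * ·)
        (fun j => mRep a (fun p => K - p) (fun p => K + p) (fun q => K + q) (fun q => K - q)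
          (u j) (u j) 0 (m + 2)) r
      = mRep a (fun p => K - p) (fun p => K + p) (fun q => K + q) (fun q => K - q)
          (u 0) (u r) (mSeqMin K u r) (m + 2)
  | 0 => rfl
  | r + 1 => by
    show natFold _ _ r * _ = _
    rw [mChainMin hadd K m u r]
    exact mRep_step_min a hadd _ _ _ _ m (u 0) (u r) (mSeqMin K u r) (u (r + 1))

lemma m_not_kperm (hmpinj : Function.Injective (mpow a))
    (hc : (∀ p q, mpow a p + mpow a q = mpow a (max p q)) ∨
          (∀ p q, mpow a p + mpow a q = mpow a (min p q)))
    (m K : ℕ) (hK : 1 ≤ K) : ¬ KPermutable (MatSR S (m + 2)) (K + 1) := by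
  intro hperm
  rcases hc with hadd | hadd
  · obtain ⟨σ, hσne, hσeq⟩ :=
      hperm (fun i : Fin (K + 1) =>
        mRep a (fun p => p) (fun p => K - p) (fun q => K - q) (fun q => q)
          i.val i.val 0 (m + 2))
    have hid := finProd_natFold
      (fun i : Fin (K + 1) =>
        mRep a (fun p => p) (fun p => K - p) (fun q => K - q) (fun q => q)
          i.val i.val 0 (m + 2))
      (fun j => mRep a (fun p => p) (fun p => K - p) (fun q => K - q) (fun q => q)
          ((fun r => r) j) ((fun r => r) j) 0 (m + 2)) (fun r hr => rfl)
    have hσp := finProd_natFold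
      (fun i : Fin (K + 1) =>
        mRep a (fun p => p) (fun p => K - p) (fun q => K - q) (fun q => q)
          (σ i).val (σ i).val 0 (m + 2))
      (fun j => mRep a (fun p => p) (fun p => K - p) (fun q => K - q) (fun q => q)
          (upad σ j) (upad σ j) 0 (m + 2))
      (fun r hr => by simp only [upad]; rw [dif_pos hr])
    have heq := (hσp.symm.trans hσeq).trans hid
    have h3 := Option.some.inj heq
    rw [mChainMax a hadd K m (upad σ) K, mChainMax a hadd K m (fun r => r) K] at h3
    have e1 := congrFun (congrFun h3 ⟨0, by omega⟩) ⟨0, by omega⟩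
    simp only [mRep] at e1
    have e2 := hmpinj e1
    simp at e2
    -- exponents: upad σ 0 + mSeqMax K (upad σ) K + (K - upad σ K)
    --          = 0 + mSeqMax K id K + (K - K)
    have hidv := mSeqMax_id K (fun r => r) K le_rfl (fun i _ => rfl)
    obtain ⟨i0, hi0, hdesc⟩ := exists_descent (upad σ) K (fun i hi => upad_le σ i hi)
      (upad_inj σ) (upad_dev σ hσne)
    have hdev := mSeqMax_lb_dev K (upad σ) (fun i hi => upad_le σ i hi) K le_rfl
      ⟨i0, hi0, hdesc⟩
    have hb0 := upad_le σ 0 (by omega)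
    have hbK := upad_le σ K le_rfl
    have hxp : K * (K + 2) = K * (K + 1) + K := by ring
    omega
  · obtain ⟨σ, hσne, hσeq⟩ :=
      hperm (fun i : Fin (K + 1) =>
        mRep a (fun p => K - p) (fun p => K + p) (fun q => K + q) (fun q => K - q)
          i.val i.val 0 (m + 2))
    have hid := finProd_natFold
      (fun i : Fin (K + 1) =>
        mRep a (fun p => K - p) (fun p => K + p) (fun q => K + q) (fun q => K - q)
          i.val i.val 0 (m + 2))
      (fun j => mRep a (fun p => K - p) (fun p => K + p) (fun q => K + q) (fun q => K - q)
          ((fun r => r) j) ((fun r => r) j) 0 (m + 2)) (fun r hr => rfl)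
    have hσp := finProd_natFold
      (fun i : Fin (K + 1) =>
        mRep a (fun p => K - p) (fun p => K + p) (fun q => K + q) (fun q => K - q)
          (σ i).val (σ i).val 0 (m + 2))
      (fun j => mRep a (fun p => K - p) (fun p => K + p) (fun q => K + q) (fun q => K - q)
          (upad σ j) (upad σ j) 0 (m + 2))
      (fun r hr => by simp only [upad]; rw [dif_pos hr])
    have heq := (hσp.symm.trans hσeq).trans hid
    have h3 := Option.some.inj heq
    rw [mChainMin a hadd K m (upad σ) K, mChainMin a hadd K m (fun r => r) K] at h3
    have e1 := congrFun (congrFun h3 ⟨0, by omega⟩) ⟨0, by omega⟩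
    simp only [mRep] at e1
    have e2 := hmpinj e1
    simp at e2
    have hidv := mSeqMin_id K (fun r => r) K le_rfl (fun i _ => rfl)
    obtain ⟨i0, hi0, hdesc⟩ := exists_descent (upad σ) K (fun i hi => upad_le σ i hi)
      (upad_inj σ) (upad_dev σ hσne)
    have hdev := mSeqMin_ub_dev K (upad σ) (fun i hi => upad_le σ i hi) K le_rfl
      ⟨i0, hi0, hdesc⟩
    have hb0 := upad_le σ 0 (by omega)
    have hbK := upad_le σ K le_rfl
    have hxp : K * (2 * K + 1) = K * (2 * K) + K := by ring
    omega

end MMain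


/-! ### Positive results: `U_1` and `U_2` are strongly permutable -/

section Positive

variable {S : Type u} [BipotentSemiring S]

lemma adj01_add_comm (x y : Adj01 S) : x + y = y + x := by
  cases x <;> cases y <;>
    first
      | rfl
      | (show Adj01.elem _ = Adj01.elem _
         rw [PlainSemiring.add_comm'])

lemma finProd_two {T : Type*} [Mul T] (s : Fin 2 → T) :
    finProd s = some (s 0 * s 1) := rfl

lemma sp_of_comm {T : Type*} [Mul T] (hcomm : ∀ x y : T, x * y = y * x) :
    StronglyPermutable T := by
  refine ⟨2, le_rfl, fun s => ⟨Equiv.swap 0 1, ?_, ?_⟩⟩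
  · intro h
    have h0 := congrArg (fun σ : Equiv.Perm (Fin 2) => σ 0) h
    simp [Equiv.swap_apply_left] at h0
  · rw [finProd_two, finProd_two]
    simp only [Equiv.swap_apply_left, Equiv.swap_apply_right]
    rw [hcomm (s 1) (s 0)]

lemma umat1_subsingleton (A B : UMat S 1) : A = B := by
  apply Subtype.ext
  funext i j
  have hi : i = 0 := Subsingleton.elim i 0
  have hj : j = 0 := Subsingleton.elim j 0
  subst hi hj
  rw [A.2.2.1 0, B.2.2.1 0]

lemma sp_umat1 : StronglyPermutable (UMat S 1) :=
  sp_of_comm (fun A B => umat1_subsingleton _ _)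

lemma umat2_comm (A B : UMat S 2) : A * B = B * A := by
  apply Subtype.ext
  have a00 : A.1 0 0 = Adj01.one := A.2.2.1 0
  have a11 : A.1 1 1 = Adj01.one := A.2.2.1 1
  have a10 : A.1 1 0 = Adj01.zero := A.2.1 1 0 (by simp)
  have b00 : B.1 0 0 = Adj01.one := B.2.2.1 0
  have b11 : B.1 1 1 = Adj01.one := B.2.2.1 1
  have b10 : B.1 1 0 = Adj01.zero := B.2.1 1 0 (by simp)
  show matMul A.1 B.1 = matMul B.1 A.1
  funext i j
  rw [matMul_natFold A.1 B.1 i j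
    (g := fun r => if r = 0 then A.1 i 0 * B.1 0 j else A.1 i 1 * B.1 1 j)
    (fun r hr => by interval_cases r <;> rfl)]
  rw [matMul_natFold B.1 A.1 i j
    (g := fun r => if r = 0 then B.1 i 0 * A.1 0 j else B.1 i 1 * A.1 1 j)
    (fun r hr => by interval_cases r <;> rfl)]
  show A.1 i 0 * B.1 0 j + A.1 i 1 * B.1 1 j = B.1 i 0 * A.1 0 j + B.1 i 1 * A.1 1 j
  fin_cases i <;> fin_cases j <;>
    simp [a00, a11, a10, b00, b11, b10, adj01_add_comm]

lemma sp_umat2 : StronglyPermutable (UMat S 2) := sp_of_comm umat2_comm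

end Positive

end Stmt8

/-- if a (not necessarily commutative) bipotent semiring contains an
element of infinite multiplicative order then `M_n(S)` and `UT_n(S)` are not strongly
permutable for `n ≥ 2`, and `U_n(S)` is not strongly permutable iff `n ≥ 3`. -/
theorem stmt_8 {S : Type*} [BipotentSemiring S] (a : S)
    (ha : (Set.range (mpow a)).Infinite) :
    (∀ n : ℕ, 2 ≤ n →
      ¬ StronglyPermutable (MatSR S n) ∧ ¬ StronglyPermutable (UTMat S n)) ∧
    (∀ n : ℕ, 0 < n → (¬ StronglyPermutable (UMat S n) ↔ 3 ≤ n)) := by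
  have hmpinj := Stmt8.mpow_injective a ha
  have hc : (∀ p q, mpow a p + mpow a q = mpow a (max p q)) ∨
      (∀ p q, mpow a p + mpow a q = mpow a (min p q)) := by
    rcases BipotentSemiring.bipotent a (a * a) with h | h
    · exact Or.inr (fun p q => Stmt8.mpow_add_min a h p q)
    · exact Or.inl (fun p q => Stmt8.mpow_add_max a h p q)
  constructor
  · intro n hn
    obtain ⟨m, rfl⟩ : ∃ m, n = m + 2 := ⟨n - 2, by omega⟩
    constructor
    · rintro ⟨k, hk, hperm⟩
      obtain ⟨K, rfl⟩ : ∃ K, k = K + 1 := ⟨k - 1, by omega⟩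
      exact Stmt8.m_not_kperm a hmpinj hc m K (by omega) hperm
    · rintro ⟨k, hk, hperm⟩
      obtain ⟨K, rfl⟩ : ∃ K, k = K + 1 := ⟨k - 1, by omega⟩
      exact Stmt8.ut_not_kperm a hmpinj hc m K (by omega) hperm
  · intro n hn
    constructor
    · intro hnsp
      by_contra h3
      have hn2 : n = 1 ∨ n = 2 := by omega
      rcases hn2 with rfl | rfl
      · exact hnsp Stmt8.sp_umat1
      · exact hnsp Stmt8.sp_umat2
    · intro h3 hsp
      obtain ⟨k, hk, hperm⟩ := hsp
      obtain ⟨m, rfl⟩ : ∃ m, n = m + 3 := ⟨n - 3, by omega⟩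
      obtain ⟨K, rfl⟩ : ∃ K, k = K + 1 := ⟨k - 1, by omega⟩
      exact Stmt8.u_not_kperm a hmpinj hc m K (by omega) hperm
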